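/- arXiv:2301.07530 — 8 statements merged into one kernel-verified Lean document; each statement's English description precedes it below -/
import Mathlib

section
/- Let E be a real inner product space, K ⊆ E a convex set, ν₀, ν₁ ∈ K and x ∈ E. Set m := (ν₀ + ν₁)/2 and define z := 2m − x if ⟨x − m, ν₁ − ν₀⟩ < 0, and z := x otherwise. Let q ∈ K be a metric projection of z onto K, i.e. q ∈ K and ‖z − q‖ ≤ ‖z − y‖ for all y ∈ K. Then ‖q − ν₁‖ ≤ ‖x − ν₀‖. -/
open RealInnerProductSpace

/-- Key property of the ADJUST procedure (Lemma `variation_trick`): with `m := (ν₀ + ν₁)/2`,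
projecting `z := 2m − x` (if the performance `⟨x − m, ν₁ − ν₀⟩` is negative) or `z := x`
(otherwise) onto the convex set `K` yields a point `q` with `‖q − ν₁‖ ≤ ‖x − ν₀‖`. -/
theorem adjust_contraction {E : Type*} [NormedAddCommGroup E] [InnerProductSpace ℝ E]
    (K : Set E) (hK : Convex ℝ K) (ν₀ ν₁ : E) (hν₀ : ν₀ ∈ K) (hν₁ : ν₁ ∈ K) (x : E)
    (m z q : E) (hm : m = (2 : ℝ)⁻¹ • (ν₀ + ν₁))
    (hz : z = if ⟪x - m, ν₁ - ν₀⟫ < 0 then (2 : ℝ) • m - x else x)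
    (hqK : q ∈ K) (hproj : ∀ y ∈ K, ‖z - q‖ ≤ ‖z - y‖) :
    ‖q - ν₁‖ ≤ ‖x - ν₀‖ := by
  letI : Nonempty K := ⟨⟨q, hqK⟩⟩
  -- q is the metric projection, hence the obtuse angle criterion holds
  have hmin : ‖z - q‖ = ⨅ w : K, ‖z - w‖ := by
    apply le_antisymm
    · exact le_ciInf fun w => hproj w w.2
    · exact ciInf_le ⟨0, fun _ ⟨_, h⟩ => h ▸ norm_nonneg _⟩ (⟨q, hqK⟩ : K)
  have hobt : ⟪z - q, ν₁ - q⟫ ≤ 0 :=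
    (norm_eq_iInf_iff_real_inner_le_zero hK hqK).mp hmin ν₁ hν₁
  -- ‖q - ν₁‖ ≤ ‖z - ν₁‖
  have h1 : ‖q - ν₁‖ ≤ ‖z - ν₁‖ := by
    have hsq : ‖q - ν₁‖ ^ 2 ≤ ‖z - ν₁‖ ^ 2 := by
      have expand : ‖z - ν₁‖ ^ 2 =
          ‖z - q‖ ^ 2 + 2 * ⟪z - q, q - ν₁⟫ + ‖q - ν₁‖ ^ 2 := by
        have : z - ν₁ = (z - q) + (q - ν₁) := by abel
        rw [this, ← real_inner_self_eq_norm_sq, ← real_inner_self_eq_norm_sq,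
          ← real_inner_self_eq_norm_sq, inner_add_add_self]
        rw [real_inner_comm (q - ν₁) (z - q)]
        ring
      have hge : 0 ≤ ⟪z - q, q - ν₁⟫ := by
        have : ⟪z - q, q - ν₁⟫ = - ⟪z - q, ν₁ - q⟫ := by
          rw [← inner_neg_right]; congr 1; abel
        linarith [this ▸ neg_nonneg.mpr hobt]
      nlinarith [sq_nonneg ‖z - q‖]
    exact (pow_le_pow_iff_left₀ (norm_nonneg _) (norm_nonneg _) two_ne_zero).mp hsq
  -- ‖z - ν₁‖ ≤ ‖x - ν₀‖
  have h2 : ‖z - ν₁‖ ≤ ‖x - ν₀‖ := by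
    by_cases hc : ⟪x - m, ν₁ - ν₀⟫ < 0
    · rw [hz, if_pos hc]
      have : (2 : ℝ) • m - x - ν₁ = -(x - ν₀) := by
        rw [hm]; module
      rw [this, norm_neg]
    · rw [hz, if_neg hc]
      push_neg at hc
      have hsq : ‖x - ν₁‖ ^ 2 ≤ ‖x - ν₀‖ ^ 2 := by
        have e1 : x - ν₁ = (x - m) - (2 : ℝ)⁻¹ • (ν₁ - ν₀) := by
          rw [hm]; module
        have e0 : x - ν₀ = (x - m) + (2 : ℝ)⁻¹ • (ν₁ - ν₀) := by
          rw [hm]; module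
        rw [e1, e0, ← real_inner_self_eq_norm_sq, ← real_inner_self_eq_norm_sq,
          inner_add_add_self, inner_sub_sub_self, real_inner_smul_right,
          real_inner_smul_left, real_inner_smul_left, real_inner_smul_right,
          real_inner_comm]
        nlinarith [real_inner_comm (ν₁ - ν₀) (x - m), hc]
      nlinarith [norm_nonneg (x - ν₁), norm_nonneg (x - ν₀)]
  linarith
end

section
/- Let E be a real inner product space, K ⊆ E a convex set, λ, G > 0, and ℓ : E → ℝ a differentiable function with gradient ∇ℓ such that: (i) for all μ, μ₀ ∈ K, ℓ(μ) − ℓ(μ₀) ≤ ⟨∇ℓ(μ), μ − μ₀⟩ − λ‖μ − μ₀‖², and (ii) ‖∇ℓ(μ)‖ ≤ G for all μ ∈ K. Let μ* ∈ K be a minimiser of ℓ over K. Let K ≥ 1 (number of iterations) and let η′₁, …, η′_K > 0 satisfy 1/η′₁ ≤ λ and 1/η′_j − λ ≤ 1/η′_{j−1} for 2 ≤ j ≤ K. Starting from x₀ ∈ K, define the projected gradient iterates: for 0 ≤ j ≤ K−1, x_{j+1} is a metric projection onto K of x_j − η′_{j+1}∇ℓ(x_j) (i.e. x_{j+1} ∈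 K and ‖x_j − η′_{j+1}∇ℓ(x_j) − x_{j+1}‖ ≤ ‖x_j − η′_{j+1}∇ℓ(x_j) − y‖ for all y ∈ K). Then the Polyak average ν := (1/K)Σ_{j=1}^{K} x_j satisfies ℓ(ν) − ℓ(μ*) ≤ (G²/K) Σ_{j=1}^{K} η′_j. -/
/-! With `D_j = ‖x_j − μ*‖²`, the obtuse-angle property of the projection onto the convex set `K`
gives for each step `ℓ(x_j) − ℓ(μ*) ≤ (D_j − D_{j+1})/(2η_{j+1}) + η_{j+1}G²/2 − λD_j`, and the
step-size conditions make the `D` terms telescope, so the gaps at `x_0, …, x_{N−1}` sum to at most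
`(G²/2) Σ η_j`. The average runs over `x_1, …, x_N` instead; the extra gap at `x_N` is at most
`G²/(4λ) ≤ G²η_1/4` by strong convexity alone, and the gap at `x_0` is nonnegative. Finally the
strong-convexity inequality implies convexity, so Jensen passes the bound to the Polyak average. -/

open RealInnerProductSpace Finset

section ProjectedGradientStep

variable {E : Type*} [NormedAddCommGroup E] [InnerProductSpace ℝ E] {K : Set E} {z p y : E}

theorem real_inner_sub_le_zero_of_forall_norm_sub_le (hK : Convex ℝ K) (hp : p ∈ K)
    (hmin : ∀ w ∈ K, ‖z - p‖ ≤ ‖z - w‖) (hy : y ∈ K) : ⟪z - p, y - p⟫ ≤ 0 := by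
  have : Nonempty K := ⟨⟨p, hp⟩⟩
  refine (norm_eq_iInf_iff_real_inner_le_zero hK hp).mp (le_antisymm ?_ ?_) y hy
  · exact le_ciInf fun w => hmin w w.2
  · exact ciInf_le ⟨0, fun _ ⟨_, hw⟩ => hw ▸ norm_nonneg _⟩ (⟨p, hp⟩ : K)

theorem norm_sub_le_of_forall_norm_sub_le (hK : Convex ℝ K) (hp : p ∈ K)
    (hmin : ∀ w ∈ K, ‖z - p‖ ≤ ‖z - w‖) (hy : y ∈ K) : ‖p - y‖ ≤ ‖z - y‖ := by
  have hinner : 0 ≤ ⟪z - p, p - y⟫ := by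
    rw [← neg_sub y p, inner_neg_right, neg_nonneg]
    exact real_inner_sub_le_zero_of_forall_norm_sub_le hK hp hmin hy
  have hexpand := norm_add_sq_real (z - p) (p - y)
  rw [sub_add_sub_cancel] at hexpand
  refine (pow_le_pow_iff_left₀ (norm_nonneg _) (norm_nonneg _) two_ne_zero).mp ?_
  nlinarith [sq_nonneg ‖z - p‖]

theorem real_inner_le_of_projected_gradient_step (hK : Convex ℝ K) {x v : E} {η : ℝ}
    (hη : 0 < η) (hp : p ∈ K) (hmin : ∀ w ∈ K, ‖x - η • v - p‖ ≤ ‖x - η • v - w‖)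
    (hy : y ∈ K) :
    ⟪v, x - y⟫ ≤ (‖x - y‖ ^ 2 - ‖p - y‖ ^ 2) / (2 * η) + η / 2 * ‖v‖ ^ 2 := by
  have hproj : ‖p - y‖ ^ 2 ≤ ‖x - η • v - y‖ ^ 2 := by
    gcongr
    exact norm_sub_le_of_forall_norm_sub_le hK hp hmin hy
  have hexpand : ‖x - η • v - y‖ ^ 2 = ‖x - y‖ ^ 2 - 2 * η * ⟪v, x - y⟫ + η ^ 2 * ‖v‖ ^ 2 := by
    rw [sub_right_comm, norm_sub_sq_real, real_inner_smul_right, norm_smul, mul_pow,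
      Real.norm_eq_abs, sq_abs, real_inner_comm]
    ring
  rw [div_add' _ _ _ (by positivity), le_div_iff₀ (by positivity)]
  nlinarith

theorem sub_le_of_projected_gradient_step {f : E → ℝ} {g : E → E} {lam G η : ℝ} {x : E}
    (hK : Convex ℝ K) (hsc : f x - f y ≤ ⟪g x, x - y⟫ - lam * ‖x - y‖ ^ 2) (hG : ‖g x‖ ≤ G)
    (hη : 0 < η) (hp : p ∈ K) (hmin : ∀ w ∈ K, ‖x - η • g x - p‖ ≤ ‖x - η • g x - w‖)
    (hy : y ∈ K) :
    f x - f y ≤ (‖x - y‖ ^ 2 - ‖p - y‖ ^ 2) / (2 * η) + η / 2 * G ^ 2 - lam * ‖x - y‖ ^ 2 := by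
  have hdescent := real_inner_le_of_projected_gradient_step hK hη hp hmin hy
  have hgrad : η / 2 * ‖g x‖ ^ 2 ≤ η / 2 * G ^ 2 := by gcongr
  linarith

end ProjectedGradientStep

section Convexity

variable {E : Type*} [NormedAddCommGroup E] [InnerProductSpace ℝ E] {K : Set E}

theorem convexOn_of_sub_le_inner {f : E → ℝ} {g : E → E} (hK : Convex ℝ K)
    (hf : ∀ μ ∈ K, ∀ μ₀ ∈ K, f μ - f μ₀ ≤ ⟪g μ, μ - μ₀⟫) : ConvexOn ℝ K f := by
  refine ⟨hK, fun u hu w hw a b ha hb hab => ?_⟩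
  set c := a • u + b • w
  have hc : c ∈ K := hK hu hw ha hb hab
  have hcancel : a * ⟪g c, c - u⟫ + b * ⟪g c, c - w⟫ = 0 := by
    rw [← real_inner_smul_right, ← real_inner_smul_right, ← inner_add_right, smul_sub, smul_sub,
      sub_add_sub_comm, ← add_smul, hab, one_smul, sub_self, inner_zero_right]
  have hu' := mul_le_mul_of_nonneg_left (hf c hc u hu) ha
  have hw' := mul_le_mul_of_nonneg_left (hf c hc w hw) hb
  have hfc : f c = a * f c + b * f c := by rw [← add_mul, hab, one_mul]
  simp only [smul_eq_mul]
  linarith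

theorem ConvexOn.map_inv_card_smul_sum_le {f : E → ℝ} (hf : ConvexOn ℝ K f) {ι : Type*}
    {s : Finset ι} (hs : s.Nonempty) {p : ι → E} (hp : ∀ i ∈ s, p i ∈ K) :
    f ((#s : ℝ)⁻¹ • ∑ i ∈ s, p i) ≤ (#s : ℝ)⁻¹ * ∑ i ∈ s, f (p i) := by
  have hweights : ∑ _i ∈ s, (#s : ℝ)⁻¹ = 1 := by
    rw [sum_const, nsmul_eq_mul, mul_inv_cancel₀ (by simpa using hs.ne_empty)]
  have := hf.map_sum_le (fun _ _ => by positivity) hweights hp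
  rwa [← smul_sum, ← smul_sum, smul_eq_mul] at this

theorem real_inner_sub_mul_norm_sq_le {lam G η : ℝ} {v w : E} (hη : 0 < η)
    (hlam : 1 / η ≤ lam) (hv : ‖v‖ ≤ G) : ⟪v, w⟫ - lam * ‖w‖ ^ 2 ≤ η / 4 * G ^ 2 := by
  have hamgm : ‖v‖ * ‖w‖ ≤ η / 4 * ‖v‖ ^ 2 + 1 / η * ‖w‖ ^ 2 := by
    have hsq : η / 4 * ‖v‖ ^ 2 + 1 / η * ‖w‖ ^ 2 - ‖v‖ * ‖w‖ =
        (η * ‖v‖ - 2 * ‖w‖) ^ 2 / (4 * η) := by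
      field_simp
      ring
    have : 0 ≤ (η * ‖v‖ - 2 * ‖w‖) ^ 2 / (4 * η) := by positivity
    linarith
  have hv' : η / 4 * ‖v‖ ^ 2 ≤ η / 4 * G ^ 2 := by gcongr
  nlinarith [real_inner_le_norm v w, mul_le_mul_of_nonneg_right hlam (sq_nonneg ‖w‖)]

end Convexity

theorem sum_range_add_div_le_of_step {a D η : ℕ → ℝ} {lam c : ℝ} {N : ℕ}
    (hD : ∀ j, 0 ≤ D j) (hη : ∀ j, 1 ≤ j → j ≤ N → 0 < η j) (hη1 : 1 / η 1 ≤ lam)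
    (hηrec : ∀ j, 2 ≤ j → j ≤ N → 1 / η j - lam ≤ 1 / η (j - 1))
    (hstep : ∀ j < N,
      a j ≤ (D j - D (j + 1)) / (2 * η (j + 1)) + η (j + 1) / 2 * c - lam * D j)
    {m : ℕ} (hm : 1 ≤ m) (hmN : m ≤ N) :
    ∑ j ∈ range m, a j + D m / (2 * η m) ≤ c / 2 * ∑ j ∈ Icc 1 m, η j := by
  induction m, hm using Nat.le_induction with
  | base =>
    have hη1pos := hη 1 le_rfl hmN
    have hdrop : D 0 / (2 * η 1) - lam * D 0 ≤ 0 := by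
      have hcoef : 1 / (2 * η 1) ≤ lam :=
        calc 1 / (2 * η 1) ≤ 1 / η 1 := by gcongr; linarith
          _ ≤ lam := hη1
      have := mul_le_mul_of_nonneg_left hcoef (hD 0)
      rw [← div_eq_mul_one_div] at this
      linarith
    have h := hstep 0 hmN
    rw [sub_div] at h
    rw [range_one, sum_singleton, Icc_self, sum_singleton]
    linarith
  | succ m hm ih =>
    have hlam : 0 ≤ lam := le_trans (by have := hη 1 le_rfl (by omega); positivity) hη1
    have hdrop : D m / (2 * η (m + 1)) - lam * D m ≤ D m / (2 * η m) := by
      have hcoef : 1 / (2 * η (m + 1)) - lam ≤ 1 / (2 * η m) := by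
        have := hηrec (m + 1) (by omega) hmN
        rw [Nat.add_sub_cancel] at this
        have halve (t : ℝ) : 1 / (2 * t) = 1 / t / 2 := by ring
        rw [halve, halve]
        linarith
      have := mul_le_mul_of_nonneg_left hcoef (hD m)
      rw [mul_sub, ← div_eq_mul_one_div, ← div_eq_mul_one_div] at this
      linarith
    have h := hstep m (by omega)
    rw [sub_div] at h
    rw [sum_range_succ, sum_Icc_succ_top (by omega)]
    linarith [ih (by omega)]

theorem sum_Icc_one_le_sum_range_add {M : Type*} [AddCommMonoid M] [PartialOrder M]
    [IsOrderedAddMonoid M] (a : ℕ → M) (N : ℕ) (h0 : 0 ≤ a 0) :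
    ∑ j ∈ Icc 1 N, a j ≤ ∑ j ∈ range N, a j + a N := by
  rw [← sum_range_succ, sum_range_eq_add_Ico _ (by omega : 0 < N + 1), Ico_add_one_right_eq_Icc]
  exact le_add_of_nonneg_left h0

theorem construct_guarantee_general {E : Type*} [NormedAddCommGroup E] [InnerProductSpace ℝ E]
    (K : Set E) (hK : Convex ℝ K) (lam G : ℝ) (hlam : 0 < lam)
    (ℓ : E → ℝ) (g : E → E)
    (hsc : ∀ μ ∈ K, ∀ μ₀ ∈ K, ℓ μ - ℓ μ₀ ≤ ⟪g μ, μ - μ₀⟫ - lam * ‖μ - μ₀‖ ^ 2)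
    (hGb : ∀ μ ∈ K, ‖g μ‖ ≤ G)
    (μstar : E) (hμstarK : μstar ∈ K) (hmin : ∀ y ∈ K, ℓ μstar ≤ ℓ y)
    (N : ℕ) (hN : 1 ≤ N) (η : ℕ → ℝ)
    (hηpos : ∀ j, 1 ≤ j → j ≤ N → 0 < η j)
    (hη1 : 1 / η 1 ≤ lam)
    (hηrec : ∀ j, 2 ≤ j → j ≤ N → 1 / η j - lam ≤ 1 / η (j - 1))
    (x : ℕ → E) (hx0 : x 0 ∈ K)
    (hiter : ∀ j < N, x (j + 1) ∈ K ∧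
      ∀ y ∈ K, ‖x j - η (j + 1) • g (x j) - x (j + 1)‖ ≤ ‖x j - η (j + 1) • g (x j) - y‖)
    (ν : E) (hν : ν = (N : ℝ)⁻¹ • ∑ j ∈ Icc 1 N, x j) :
    ℓ ν - ℓ μstar ≤ G ^ 2 / N * ∑ j ∈ Icc 1 N, η j := by
  have hmem : ∀ j ≤ N, x j ∈ K
    | 0, _ => hx0
    | j + 1, hj => (hiter j hj).1
  have hgaps : ∑ j ∈ Icc 1 N, (ℓ (x j) - ℓ μstar) ≤ G ^ 2 * ∑ j ∈ Icc 1 N, η j := by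
    have hη1pos := hηpos 1 le_rfl hN
    have hfirst := sum_range_add_div_le_of_step (fun j => sq_nonneg ‖x j - μstar‖) hηpos hη1
      hηrec (fun j hj => sub_le_of_projected_gradient_step hK (hsc _ (hmem j hj.le) _ hμstarK)
        (hGb _ (hmem j hj.le)) (hηpos _ (by omega) hj) (hiter j hj).1 (hiter j hj).2 hμstarK)
      hN le_rfl
    have hlast : ℓ (x N) - ℓ μstar ≤ η 1 / 4 * G ^ 2 := (hsc _ (hmem N le_rfl) _ hμstarK).trans
      (real_inner_sub_mul_norm_sq_le hη1pos hη1 (hGb _ (hmem N le_rfl)))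
    have hshift := sum_Icc_one_le_sum_range_add (fun j => ℓ (x j) - ℓ μstar) N
      (sub_nonneg.mpr (hmin _ hx0))
    have hη1_le : η 1 ≤ ∑ j ∈ Icc 1 N, η j :=
      single_le_sum (fun j hj => (hηpos j (mem_Icc.mp hj).1 (mem_Icc.mp hj).2).le)
        (mem_Icc.mpr ⟨le_rfl, hN⟩)
    have hdist : 0 ≤ ‖x N - μstar‖ ^ 2 / (2 * η N) :=
      div_nonneg (sq_nonneg _) (by linarith [hηpos N hN le_rfl])
    linarith [mul_le_mul_of_nonneg_left hη1_le (sq_nonneg G), mul_nonneg (sq_nonneg G) hη1pos.le]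
  have hconv : ConvexOn ℝ K (fun μ => ℓ μ - ℓ μstar) :=
    convexOn_of_sub_le_inner (g := g) hK fun μ hμ μ₀ hμ₀ => by
      rw [sub_sub_sub_cancel_right]
      linarith [hsc μ hμ μ₀ hμ₀, mul_nonneg hlam.le (sq_nonneg ‖μ - μ₀‖)]
  have hjensen := hconv.map_inv_card_smul_sum_le (nonempty_Icc.mpr hN)
    (fun j hj => hmem j (mem_Icc.mp hj).2)
  rw [Nat.card_Icc, Nat.add_sub_cancel, ← hν] at hjensen
  calc ℓ ν - ℓ μstar ≤ (N : ℝ)⁻¹ * ∑ j ∈ Icc 1 N, (ℓ (x j) - ℓ μstar) := hjensen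
    _ ≤ (N : ℝ)⁻¹ * (G ^ 2 * ∑ j ∈ Icc 1 N, η j) := by gcongr
    _ = G ^ 2 / N * ∑ j ∈ Icc 1 N, η j := by ring

/-- Guarantee for the CONSTRUCT procedure (Lemma `GD_add_know`): running `K` steps of
projected gradient descent on a `λ`-strongly convex loss `ℓ` (in the paper's convention)
with gradients bounded by `G` and step sizes `η'` satisfying `1/η'₁ ≤ λ` and
`1/η'_j − λ ≤ 1/η'_{j−1}`, the Polyak average `ν = (1/K) Σ_{j=1}^K x_j` satisfies
`ℓ(ν) − ℓ(μ*) ≤ (G²/K) Σ_{j=1}^K η'_j`. -/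
theorem construct_guarantee {E : Type*} [NormedAddCommGroup E] [InnerProductSpace ℝ E]
    [CompleteSpace E]
    (K : Set E) (hK : Convex ℝ K) (lam G : ℝ) (hlam : 0 < lam) (hG : 0 < G)
    (ℓ : E → ℝ) (g : E → E) (hdiff : ∀ x : E, HasGradientAt ℓ (g x) x)
    (hsc : ∀ μ ∈ K, ∀ μ₀ ∈ K, ℓ μ - ℓ μ₀ ≤ ⟪g μ, μ - μ₀⟫ - lam * ‖μ - μ₀‖ ^ 2)
    (hGb : ∀ μ ∈ K, ‖g μ‖ ≤ G)
    (μstar : E) (hμstarK : μstar ∈ K) (hmin : ∀ y ∈ K, ℓ μstar ≤ ℓ y)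
    (N : ℕ) (hN : 1 ≤ N) (η : ℕ → ℝ)
    (hηpos : ∀ j, 1 ≤ j → j ≤ N → 0 < η j)
    (hη1 : 1 / η 1 ≤ lam)
    (hηrec : ∀ j, 2 ≤ j → j ≤ N → 1 / η j - lam ≤ 1 / η (j - 1))
    (x : ℕ → E) (hx0 : x 0 ∈ K)
    (hiter : ∀ j < N, x (j + 1) ∈ K ∧
      ∀ y ∈ K, ‖x j - η (j + 1) • g (x j) - x (j + 1)‖ ≤ ‖x j - η (j + 1) • g (x j) - y‖)
    (ν : E) (hν : ν = (N : ℝ)⁻¹ • ∑ j ∈ Icc 1 N, x j) :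
    ℓ ν - ℓ μstar ≤ G ^ 2 / N * ∑ j ∈ Icc 1 N, η j :=
  construct_guarantee_general K hK lam G hlam ℓ g hsc hGb μstar hμstarK hmin N hN η hηpos hη1 hηrec
    x hx0 hiter ν hν
end

section
/- Let E be a real inner product space, K ⊆ E a convex set, λ, G > 0, and ℓ : E → ℝ differentiable with gradient ∇ℓ such that for all μ, μ₀ ∈ K, ℓ(μ) − ℓ(μ₀) ≤ ⟨∇ℓ(μ), μ − μ₀⟩ − λ‖μ − μ₀‖², and ‖∇ℓ(μ)‖ ≤ G on K. Let μ* ∈ K minimise ℓ over K, let K ≥ 1, set η′_j := 1/(λ j) for 1 ≤ j ≤ K, start from x₀ ∈ K and define x_{j+1} as a metric projection onto K of x_j − η′_{j+1}∇ℓ(x_j). Then the Polyak average ν := (1/K)Σ_{j=1}^{K} x_j satisfies ℓ(ν) − ℓ(μ*) ≤ G²(1 + log K)/(λ K). -/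
/-!
Projecting onto a convex set does not increase the distance to any point of the set, so with
`r_t = ‖x_t - μ*‖²` one step of size `η` gives
`2η (ℓ x_t - ℓ μ*) ≤ (1 - 2ηλ) r_t - r_{t+1} + η² G²`. For `η = 1/(λ(t+1))` and `r_t ≥ 0` this
becomes `ℓ x_t - ℓ μ* ≤ λ/2 (t r_t - (t+1) r_{t+1}) + G²/(2λ(t+1))`, which telescopes to the
harmonic bound `G²/(2λ) (1 + log N)` for the gaps at `x_0, …, x_{N-1}`. The average `ν` uses
`x_1, …, x_N` instead; the two boundary gaps cost at most `G²/(4λ)` each, since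
`G a - λ a² ≤ G²/(4λ)`. Finally convexity (Jensen) bounds the gap at `ν` by the average gap.
-/

open RealInnerProductSpace Finset

section

variable {E : Type*} [NormedAddCommGroup E] [InnerProductSpace ℝ E]

def IsMetricProjection (K : Set E) (z q : E) : Prop :=
  q ∈ K ∧ ∀ y ∈ K, ‖z - q‖ ≤ ‖z - y‖

namespace IsMetricProjection

variable {K : Set E} {z q y : E}

theorem inner_sub_nonpos (hK : Convex ℝ K) (h : IsMetricProjection K z q) (hy : y ∈ K) :
    ⟪z - q, y - q⟫ ≤ 0 := by
  have : Nonempty K := ⟨⟨q, h.1⟩⟩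
  refine (norm_eq_iInf_iff_real_inner_le_zero hK h.1).1 ?_ y hy
  -- a nearest point attains the infimum of the distances from `z` to `K`
  exact le_antisymm (le_ciInf fun w => h.2 w w.2)
    (ciInf_le ⟨0, Set.forall_mem_range.2 fun _ => norm_nonneg _⟩ (⟨q, h.1⟩ : K))

theorem norm_sub_sq_le (hK : Convex ℝ K) (h : IsMetricProjection K z q) (hy : y ∈ K) :
    ‖q - y‖ ^ 2 ≤ ‖z - y‖ ^ 2 := by
  have hexp : ‖z - y‖ ^ 2 = ‖z - q‖ ^ 2 - 2 * ⟪z - q, y - q⟫ + ‖y - q‖ ^ 2 := by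
    rw [← norm_sub_sq_real, sub_sub_sub_cancel_right]
  rw [hexp, norm_sub_rev]
  nlinarith [h.inner_sub_nonpos hK hy, sq_nonneg ‖z - q‖]

theorem norm_sub_sq_le_of_sub_smul {x v x' : E} {η : ℝ} (hK : Convex ℝ K)
    (h : IsMetricProjection K (x - η • v) x') (hy : y ∈ K) :
    ‖x' - y‖ ^ 2 ≤ ‖x - y‖ ^ 2 - 2 * η * ⟪v, x - y⟫ + η ^ 2 * ‖v‖ ^ 2 := by
  have hexp : ‖x - η • v - y‖ ^ 2 = ‖x - y‖ ^ 2 - 2 * η * ⟪v, x - y⟫ + η ^ 2 * ‖v‖ ^ 2 := by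
    rw [sub_right_comm, norm_sub_sq_real, real_inner_smul_right, real_inner_comm, norm_smul,
      mul_pow, Real.norm_eq_abs, sq_abs]
    ring
  exact hexp ▸ h.norm_sub_sq_le hK hy

end IsMetricProjection

section FirstOrder

variable {K : Set E} {ℓ : E → ℝ} {g : E → E} {lam G η : ℝ} {x x' u : E}

theorem two_mul_sub_le_of_isMetricProjection (hK : Convex ℝ K) (hη : 0 ≤ η)
    (hsc : ℓ x - ℓ u ≤ ⟪g x, x - u⟫ - lam * ‖x - u‖ ^ 2) (hG : ‖g x‖ ≤ G)
    (h : IsMetricProjection K (x - η • g x) x') (hu : u ∈ K) :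
    2 * η * (ℓ x - ℓ u) ≤ (1 - 2 * η * lam) * ‖x - u‖ ^ 2 - ‖x' - u‖ ^ 2 + η ^ 2 * G ^ 2 := by
  have hstep := h.norm_sub_sq_le_of_sub_smul hK hu
  have hgrad : η ^ 2 * ‖g x‖ ^ 2 ≤ η ^ 2 * G ^ 2 := by gcongr
  linarith [mul_le_mul_of_nonneg_left hsc (by positivity : 0 ≤ 2 * η)]

theorem sub_le_sq_div_four_mul (hlam : 0 < lam)
    (hsc : ℓ x - ℓ u ≤ ⟪g x, x - u⟫ - lam * ‖x - u‖ ^ 2) (hG : ‖g x‖ ≤ G) :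
    ℓ x - ℓ u ≤ G ^ 2 / (4 * lam) := by
  have hinner : ⟪g x, x - u⟫ ≤ G * ‖x - u‖ :=
    (real_inner_le_norm _ _).trans (mul_le_mul_of_nonneg_right hG (norm_nonneg _))
  rw [le_div_iff₀ (by positivity)]
  nlinarith [sq_nonneg (G - 2 * lam * ‖x - u‖)]

theorem card_mul_apply_average_le_sum {ι : Type*} (hK : Convex ℝ K)
    (hconv : ∀ μ ∈ K, ∀ μ₀ ∈ K, ℓ μ - ℓ μ₀ ≤ ⟪g μ, μ - μ₀⟫)
    {s : Finset ι} (hs : s.Nonempty) {p : ι → E} (hp : ∀ i ∈ s, p i ∈ K) :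
    #s * ℓ ((#s : ℝ)⁻¹ • ∑ i ∈ s, p i) ≤ ∑ i ∈ s, ℓ (p i) := by
  generalize hν : (#s : ℝ)⁻¹ • ∑ i ∈ s, p i = ν
  have hcard : (#s : ℝ) ≠ 0 := by exact_mod_cast hs.card_pos.ne'
  have hνK : ν ∈ K := by
    rw [← hν, smul_sum]
    refine hK.sum_mem (fun _ _ => by positivity) ?_ hp
    rw [sum_const, nsmul_eq_mul, mul_inv_cancel₀ hcard]
  have hcentered : ∑ i ∈ s, (ν - p i) = 0 := by
    rw [sum_sub_distrib, sum_const, ← Nat.cast_smul_eq_nsmul ℝ, ← hν, smul_inv_smul₀ hcard,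
      sub_self]
  calc #s * ℓ ν = ∑ i ∈ s, ℓ (p i) + ∑ i ∈ s, (ℓ ν - ℓ (p i)) := by
        rw [sum_sub_distrib, sum_const, nsmul_eq_mul]; ring
    _ ≤ ∑ i ∈ s, ℓ (p i) + ∑ i ∈ s, ⟪g ν, ν - p i⟫ := by
        gcongr with i hi
        exact hconv ν hνK (p i) (hp i hi)
    _ = ∑ i ∈ s, ℓ (p i) := by rw [← inner_sum, hcentered, inner_zero_right, add_zero]

end FirstOrder

end

theorem sum_le_of_harmonic_step_recursion {lam G : ℝ} (hlam : 0 < lam) {η δ r : ℕ → ℝ}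
    (hr : ∀ t, 0 ≤ r t) {N : ℕ} (hη : ∀ t < N, η (t + 1) = 1 / (lam * (t + 1)))
    (hstep : ∀ t < N,
      2 * η (t + 1) * δ t ≤ (1 - 2 * η (t + 1) * lam) * r t - r (t + 1) + η (t + 1) ^ 2 * G ^ 2) :
    ∑ t ∈ range N, δ t ≤ G ^ 2 / (2 * lam) * (1 + Real.log N) := by
  have hterm : ∀ t ∈ range N, δ t ≤ (lam / 2 * t * r t - lam / 2 * (t + 1 : ℕ) * r (t + 1))
      + G ^ 2 / (2 * lam) * ((t : ℝ) + 1)⁻¹ := by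
    intro t ht
    have h := hstep t (mem_range.1 ht)
    rw [hη t (mem_range.1 ht)] at h
    have hc : 0 < lam * (t + 1) := by positivity
    field_simp at h ⊢
    push_cast
    nlinarith [mul_nonneg hc.le (mul_nonneg hlam.le (hr t))]
  calc ∑ t ∈ range N, δ t
      ≤ ∑ t ∈ range N, ((lam / 2 * t * r t - lam / 2 * (t + 1 : ℕ) * r (t + 1))
          + G ^ 2 / (2 * lam) * ((t : ℝ) + 1)⁻¹) := sum_le_sum hterm
    _ = -(lam / 2 * N * r N) + G ^ 2 / (2 * lam) * ∑ t ∈ range N, ((t : ℝ) + 1)⁻¹ := by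
        rw [sum_add_distrib, sum_range_sub' (fun t => lam / 2 * t * r t), mul_sum]
        simp
    _ ≤ G ^ 2 / (2 * lam) * (1 + Real.log N) := by
        have hrN : 0 ≤ lam / 2 * N * r N := by have := hr N; positivity
        have hharmonic := harmonic_le_one_add_log N
        push_cast [harmonic] at hharmonic
        linarith [mul_le_mul_of_nonneg_left hharmonic (by positivity : 0 ≤ G ^ 2 / (2 * lam))]

theorem construct_guarantee_harmonic_general {E : Type*} [NormedAddCommGroup E] [InnerProductSpace ℝ E]
    (K : Set E) (hK : Convex ℝ K) (lam G : ℝ) (hlam : 0 < lam)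
    (ℓ : E → ℝ) (g : E → E)
    (hsc : ∀ μ ∈ K, ∀ μ₀ ∈ K, ℓ μ - ℓ μ₀ ≤ ⟪g μ, μ - μ₀⟫ - lam * ‖μ - μ₀‖ ^ 2)
    (hGb : ∀ μ ∈ K, ‖g μ‖ ≤ G)
    (μstar : E) (hμstarK : μstar ∈ K)
    (N : ℕ) (hN : 1 ≤ N) (η : ℕ → ℝ) (hη : ∀ j, 1 ≤ j → j ≤ N → η j = 1 / (lam * j))
    (x : ℕ → E) (hx0 : x 0 ∈ K)
    (hiter : ∀ j < N, x (j + 1) ∈ K ∧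
      ∀ y ∈ K, ‖x j - η (j + 1) • g (x j) - x (j + 1)‖ ≤ ‖x j - η (j + 1) • g (x j) - y‖)
    (ν : E) (hν : ν = (N : ℝ)⁻¹ • ∑ j ∈ Icc 1 N, x j) :
    ℓ ν - ℓ μstar ≤ G ^ 2 * (1 + Real.log N) / (lam * N) := by
  have hxK : ∀ j ≤ N, x j ∈ K
    | 0, _ => hx0
    | j + 1, hj => (hiter j hj).1
  have hηt : ∀ t < N, η (t + 1) = 1 / (lam * (t + 1)) := fun t ht => by
    rw [hη (t + 1) (Nat.le_add_left 1 t) ht, Nat.cast_succ]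
  have hsum := sum_le_of_harmonic_step_recursion (δ := fun t => ℓ (x t) - ℓ μstar)
    (r := fun t => ‖x t - μstar‖ ^ 2) hlam (fun _ => sq_nonneg _) hηt fun t ht =>
      two_mul_sub_le_of_isMetricProjection hK (by rw [hηt t ht]; positivity)
        (hsc _ (hxK t ht.le) _ hμstarK) (hGb _ (hxK t ht.le)) (hiter t ht) hμstarK
  have hlast : ℓ (x N) - ℓ μstar ≤ G ^ 2 / (4 * lam) :=
    sub_le_sq_div_four_mul hlam (hsc _ (hxK N le_rfl) _ hμstarK) (hGb _ (hxK N le_rfl))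
  have hfirst : ℓ μstar - ℓ (x 0) ≤ G ^ 2 / (4 * lam) :=
    sub_le_sq_div_four_mul hlam (hsc _ hμstarK _ hx0) (hGb _ hμstarK)
  have hshift : ∑ j ∈ Icc 1 N, ℓ (x j) + ℓ (x 0) = ∑ t ∈ range N, ℓ (x t) + ℓ (x N) := by
    rw [← sum_range_succ, sum_range_eq_add_Ico _ N.succ_pos, Nat.succ_eq_add_one,
      Ico_add_one_right_eq_Icc, add_comm]
  have hjensen : N * ℓ ν ≤ ∑ j ∈ Icc 1 N, ℓ (x j) := by
    have h := card_mul_apply_average_le_sum hK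
      (fun μ hμ μ₀ hμ₀ => (hsc μ hμ μ₀ hμ₀).trans (sub_le_self _ (by positivity)))
      (nonempty_Icc.2 hN) (fun j hj => hxK j (mem_Icc.1 hj).2)
    rwa [Nat.card_Icc, Nat.add_sub_cancel, ← hν] at h
  have hlog : 1 ≤ 1 + Real.log N := le_add_of_nonneg_right (Real.log_nonneg (by exact_mod_cast hN))
  rw [sum_sub_distrib, sum_const, card_range, nsmul_eq_mul] at hsum
  have htotal : N * (ℓ ν - ℓ μstar) ≤ G ^ 2 * (1 + Real.log N) / lam := by
    have hboundary : G ^ 2 / (2 * lam) ≤ G ^ 2 / (2 * lam) * (1 + Real.log N) :=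
      le_mul_of_one_le_right (by positivity) hlog
    linarith [show G ^ 2 / (4 * lam) = G ^ 2 / (2 * lam) / 2 by ring,
      show G ^ 2 * (1 + Real.log N) / lam = 2 * (G ^ 2 / (2 * lam) * (1 + Real.log N)) by ring]
  rwa [← div_div, le_div_iff₀' (by exact_mod_cast hN)]

/-- The CONSTRUCT guarantee instantiated with harmonic step sizes `η'_j = 1/(λ j)`:
the Polyak average `ν` of `K` projected-gradient-descent iterates on a `λ`-strongly convex
loss (paper's convention) with `G`-bounded gradients satisfies
`ℓ(ν) − ℓ(μ*) ≤ G²(1 + log K)/(λ K)`. -/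
theorem construct_guarantee_harmonic {E : Type*} [NormedAddCommGroup E] [InnerProductSpace ℝ E]
    [CompleteSpace E]
    (K : Set E) (hK : Convex ℝ K) (lam G : ℝ) (hlam : 0 < lam) (hG : 0 < G)
    (ℓ : E → ℝ) (g : E → E) (hdiff : ∀ x : E, HasGradientAt ℓ (g x) x)
    (hsc : ∀ μ ∈ K, ∀ μ₀ ∈ K, ℓ μ - ℓ μ₀ ≤ ⟪g μ, μ - μ₀⟫ - lam * ‖μ - μ₀‖ ^ 2)
    (hGb : ∀ μ ∈ K, ‖g μ‖ ≤ G)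
    (μstar : E) (hμstarK : μstar ∈ K) (hmin : ∀ y ∈ K, ℓ μstar ≤ ℓ y)
    (N : ℕ) (hN : 1 ≤ N) (η : ℕ → ℝ) (hη : ∀ j, 1 ≤ j → j ≤ N → η j = 1 / (lam * j))
    (x : ℕ → E) (hx0 : x 0 ∈ K)
    (hiter : ∀ j < N, x (j + 1) ∈ K ∧
      ∀ y ∈ K, ‖x j - η (j + 1) • g (x j) - x (j + 1)‖ ≤ ‖x j - η (j + 1) • g (x j) - y‖)
    (ν : E) (hν : ν = (N : ℝ)⁻¹ • ∑ j ∈ Icc 1 N, x j) :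
    ℓ ν - ℓ μstar ≤ G ^ 2 * (1 + Real.log N) / (lam * N) :=
  construct_guarantee_harmonic_general K hK lam G hlam ℓ g hsc hGb μstar hμstarK N hN η hη x hx0
    hiter ν hν
end

section
/- Let E be a real inner product space and K ⊆ E a convex set of diameter at most D > 0 (i.e. ‖x − y‖ ≤ D for all x, y ∈ K). Let T ≥ 1, G > 0, and let ℓ₁, …, ℓ_T : E → ℝ be differentiable convex functions (ℓ_t(y) ≥ ℓ_t(x) + ⟨∇ℓ_t(x), y − x⟩ for x, y ∈ K) with ‖∇ℓ_t(x)‖ ≤ G for x ∈ K. Let η₁ ≥ η₂ ≥ … ≥ η_T > 0. Suppose μ̂₁, …, μ̂_{T+1} ∈ K and ν₁, …, ν_{T+1} ∈ K satisfy, for every 1 ≤ t ≤ T, the ADJUST contraction property ‖μ̂_{t+1} − ν_{t+1}‖ ≤ ‖(μ̂_t − η_t ∇ℓ_t(μ̂_t)) − ν_t‖. Then Σ_{t=1}^{T} ℓ_t(μ̂_t) − Σ_{t=1}^{T} ℓ_t(ν_t) ≤ D²/(2η_T) + (G²/2) Σ_{t=1}^{T} η_t. -/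
open RealInnerProductSpace Finset

/-! The ADJUST contraction makes `‖μ̂_t − ν_t‖²` behave like the distance to a fixed comparator in
the classical online-gradient-descent analysis: expanding `‖x − η u‖²` bounds the linearised
regret of each round by `(‖μ̂_t − ν_t‖² − ‖μ̂_{t+1} − ν_{t+1}‖²)/(2η_t) + η_t G²/2`, and since
`1/(2η_t)` is nondecreasing the first terms sum (by parts) to at most `D²/(2η_T)`. -/

lemma inner_le_of_norm_le_norm_sub_smul {E : Type*} [NormedAddCommGroup E]
    [InnerProductSpace ℝ E] {x y u : E} {η G : ℝ} (hη : 0 < η) (hu : ‖u‖ ≤ G)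
    (hy : ‖y‖ ≤ ‖x - η • u‖) :
    ⟪x, u⟫ ≤ (2 * η)⁻¹ * (‖x‖ ^ 2 - ‖y‖ ^ 2) + G ^ 2 / 2 * η := by
  have hexpand : ‖x - η • u‖ ^ 2 = ‖x‖ ^ 2 - 2 * η * ⟪x, u⟫ + η ^ 2 * ‖u‖ ^ 2 := by
    rw [norm_sub_sq_real, real_inner_smul_right, norm_smul, Real.norm_of_nonneg hη.le]
    ring
  have hu2 : ‖u‖ ^ 2 ≤ G ^ 2 := pow_le_pow_left₀ (norm_nonneg u) hu 2
  have hy2 : ‖y‖ ^ 2 ≤ ‖x - η • u‖ ^ 2 := pow_le_pow_left₀ (norm_nonneg y) hy 2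
  have hkey : 2 * η * ⟪x, u⟫ ≤ ‖x‖ ^ 2 - ‖y‖ ^ 2 + η ^ 2 * G ^ 2 := by
    nlinarith [mul_le_mul_of_nonneg_left hu2 (sq_nonneg η)]
  calc ⟪x, u⟫ = (2 * η)⁻¹ * (2 * η * ⟪x, u⟫) := by field_simp
    _ ≤ (2 * η)⁻¹ * (‖x‖ ^ 2 - ‖y‖ ^ 2 + η ^ 2 * G ^ 2) := by gcongr
    _ = (2 * η)⁻¹ * (‖x‖ ^ 2 - ‖y‖ ^ 2) + G ^ 2 / 2 * η := by field_simp

lemma sum_Icc_mul_sub_succ_le {w b : ℕ → ℝ} {B : ℝ} {T : ℕ} (hT : 1 ≤ T) (hw₁ : 0 ≤ w 1)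
    (hw : ∀ t, 1 ≤ t → t < T → w t ≤ w (t + 1)) (hb : ∀ t ∈ Icc 1 T, b t ≤ B) :
    ∑ t ∈ Icc 1 T, w t * (b t - b (t + 1)) ≤ w T * (B - b (T + 1)) := by
  induction T, hT using Nat.le_induction with
  | base =>
    simp only [Icc_self, sum_singleton]
    have := hb 1 (by simp)
    gcongr
  | succ T hT ih =>
    rw [sum_Icc_succ_top (by omega)]
    have hprev := ih (fun t h1 h2 => hw t h1 (by omega))
      (fun t ht => hb t (Icc_subset_Icc_right (by omega) ht))
    have hwT : w T ≤ w (T + 1) := hw T hT (by omega)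
    have hbT : b (T + 1) ≤ B := hb (T + 1) (by simp)
    nlinarith

theorem dogd_regret_vs_advice_general {E : Type*} [NormedAddCommGroup E] [InnerProductSpace ℝ E]
    (K : Set E) (D : ℝ)
    (hdiam : ∀ x ∈ K, ∀ y ∈ K, ‖x - y‖ ≤ D)
    (T : ℕ) (hT : 1 ≤ T) (G : ℝ)
    (ℓ : ℕ → E → ℝ) (g : ℕ → E → E)
    (hconv : ∀ t ∈ Icc 1 T, ∀ x ∈ K, ∀ y ∈ K, ℓ t x + ⟪g t x, y - x⟫ ≤ ℓ t y)
    (hGb : ∀ t ∈ Icc 1 T, ∀ x ∈ K, ‖g t x‖ ≤ G)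
    (η : ℕ → ℝ) (hηpos : ∀ t ∈ Icc 1 T, 0 < η t)
    (hηmono : ∀ t, 1 ≤ t → t < T → η (t + 1) ≤ η t)
    (p ν : ℕ → E)
    (hpK : ∀ t ∈ Icc 1 (T + 1), p t ∈ K) (hνK : ∀ t ∈ Icc 1 (T + 1), ν t ∈ K)
    (hadj : ∀ t ∈ Icc 1 T, ‖p (t + 1) - ν (t + 1)‖ ≤ ‖(p t - η t • g t (p t)) - ν t‖) :
    ∑ t ∈ Icc 1 T, ℓ t (p t) - ∑ t ∈ Icc 1 T, ℓ t (ν t) ≤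
      D ^ 2 / (2 * η T) + G ^ 2 / 2 * ∑ t ∈ Icc 1 T, η t := by
  set b : ℕ → ℝ := fun t => ‖p t - ν t‖ ^ 2
  have hT1 : ∀ t ∈ Icc 1 T, t ∈ Icc 1 (T + 1) := fun _ ht => Icc_subset_Icc_right T.le_succ ht
  have hstep : ∀ t ∈ Icc 1 T,
      ℓ t (p t) - ℓ t (ν t) ≤ (2 * η t)⁻¹ * (b t - b (t + 1)) + G ^ 2 / 2 * η t := by
    intro t ht
    have hlin := hconv t ht (p t) (hpK t (hT1 t ht)) (ν t) (hνK t (hT1 t ht))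
    have hreg := inner_le_of_norm_le_norm_sub_smul (hηpos t ht)
      (hGb t ht (p t) (hpK t (hT1 t ht))) ((hadj t ht).trans_eq (by rw [sub_right_comm]))
    rw [← neg_sub, inner_neg_right, real_inner_comm] at hlin
    linarith
  have hηT : 0 < η T := hηpos T (right_mem_Icc.mpr hT)
  have hη₁ : 0 < η 1 := hηpos 1 (left_mem_Icc.mpr hT)
  have htele : ∑ t ∈ Icc 1 T, (2 * η t)⁻¹ * (b t - b (t + 1)) ≤ D ^ 2 / (2 * η T) := by
    refine (sum_Icc_mul_sub_succ_le (B := D ^ 2) hT (by positivity) (fun t h1 h2 => ?_)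
      (fun t ht => ?_)).trans ?_
    · have := hηpos (t + 1) (mem_Icc.mpr ⟨by omega, by omega⟩)
      gcongr
      exact hηmono t h1 h2
    · have h := hdiam _ (hpK t (hT1 t ht)) _ (hνK t (hT1 t ht))
      exact pow_le_pow_left₀ (norm_nonneg _) h 2
    · rw [div_eq_inv_mul]
      gcongr
      exact sub_le_self _ (sq_nonneg _)
  rw [← sum_sub_distrib, mul_sum]
  calc ∑ t ∈ Icc 1 T, (ℓ t (p t) - ℓ t (ν t))
      ≤ ∑ t ∈ Icc 1 T, ((2 * η t)⁻¹ * (b t - b (t + 1)) + G ^ 2 / 2 * η t) := sum_le_sum hstep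
    _ ≤ _ := by rw [sum_add_distrib]; linarith

/-- Proposition `D-regret_convex`: dynamic regret of Dynamic OGD against the advice sequence.
If the convex losses `ℓ_t` have `G`-bounded gradients on a convex set `K` of diameter at most
`D`, the step sizes `η_t` are positive and nonincreasing, and the predictors satisfy the ADJUST
contraction `‖μ̂_{t+1} − ν_{t+1}‖ ≤ ‖(μ̂_t − η_t ∇ℓ_t(μ̂_t)) − ν_t‖` for all `1 ≤ t ≤ T`, then
`Σ ℓ_t(μ̂_t) − Σ ℓ_t(ν_t) ≤ D²/(2η_T) + (G²/2) Σ η_t`. -/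
theorem dogd_regret_vs_advice {E : Type*} [NormedAddCommGroup E] [InnerProductSpace ℝ E]
    [CompleteSpace E]
    (K : Set E) (hK : Convex ℝ K) (D : ℝ) (hD : 0 < D)
    (hdiam : ∀ x ∈ K, ∀ y ∈ K, ‖x - y‖ ≤ D)
    (T : ℕ) (hT : 1 ≤ T) (G : ℝ) (hG : 0 < G)
    (ℓ : ℕ → E → ℝ) (g : ℕ → E → E)
    (hdiff : ∀ t, ∀ x : E, HasGradientAt (ℓ t) (g t x) x)
    (hconv : ∀ t ∈ Icc 1 T, ∀ x ∈ K, ∀ y ∈ K, ℓ t x + ⟪g t x, y - x⟫ ≤ ℓ t y)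
    (hGb : ∀ t ∈ Icc 1 T, ∀ x ∈ K, ‖g t x‖ ≤ G)
    (η : ℕ → ℝ) (hηpos : ∀ t ∈ Icc 1 T, 0 < η t)
    (hηmono : ∀ t, 1 ≤ t → t < T → η (t + 1) ≤ η t)
    (p ν : ℕ → E)
    (hpK : ∀ t ∈ Icc 1 (T + 1), p t ∈ K) (hνK : ∀ t ∈ Icc 1 (T + 1), ν t ∈ K)
    (hadj : ∀ t ∈ Icc 1 T, ‖p (t + 1) - ν (t + 1)‖ ≤ ‖(p t - η t • g t (p t)) - ν t‖) :
    ∑ t ∈ Icc 1 T, ℓ t (p t) - ∑ t ∈ Icc 1 T, ℓ t (ν t) ≤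
      D ^ 2 / (2 * η T) + G ^ 2 / 2 * ∑ t ∈ Icc 1 T, η t :=
  dogd_regret_vs_advice_general K D hdiam T hT G ℓ g hconv hGb η hηpos hηmono p ν hpK hνK hadj
end

section
/- Let E be a real inner product space and K ⊆ E a convex set of diameter at most D > 0. Let T ≥ 1, λ, G > 0, and let ℓ₁, …, ℓ_T : E → ℝ be differentiable functions that are λ-strongly convex on K in the paper's convention (ℓ_t(μ) − ℓ_t(μ₀) ≤ ⟨∇ℓ_t(μ), μ − μ₀⟩ − λ‖μ − μ₀‖² for μ, μ₀ ∈ K) with ‖∇ℓ_t(x)‖ ≤ G for all x ∈ K. For each t let μ*_t ∈ K be a minimiser of ℓ_t over K. Set η_t := D/(G√t). Suppose ν₁, …, ν_{T+1} ∈ K satisfy, for every 1 ≤ t ≤ T, ℓ_t(ν_{t+1}) − ℓ_t(μ*_t) ≤ (G²/λ)(1 + log(1+T))/√T, and suppose μ̂₁, …, μ̂_{T+1} ∈ K satisfy, for every 1 ≤ t ≤ T, the ADJUST contraction property ‖μ̂_{t+1} − ν_{t+1}‖ ≤ ‖(μ̂_t − η_t ∇ℓ_t(μ̂_t)) − ν_t‖.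 Then Σ_{t=1}^{T} ℓ_t(μ̂_t) − Σ_{t=1}^{T} ℓ_t(μ*_t) ≤ G·Σ_{t=1}^{T}‖ν_{t+1} − ν_t‖ − λ·Σ_{t=1}^{T}‖ν_{t+1} − ν_t‖² + (3/2)·G·D·√T + (G²/λ)(1 + log(1+T))·√T. -/
/-!
Split each round's regret as `ℓ_t(μ̂_t) − ℓ_t(ν_t)`, `ℓ_t(ν_t) − ℓ_t(ν_{t+1})` and
`ℓ_t(ν_{t+1}) − ℓ_t(μ*_t)`. Strong convexity bounds the first by `⟨∇ℓ_t(μ̂_t), μ̂_t − ν_t⟩` and the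
second by `G‖ν_{t+1} − ν_t‖ − λ‖ν_{t+1} − ν_t‖²`; the third is the CONSTRUCT guarantee. The inner
products are controlled as in online gradient descent against the moving comparator `ν`: the
ADJUST contraction makes `‖μ̂_t − ν_t‖²` a potential, and Abel summation with the increasing
weights `1/η_t` together with `∑ 1/√t ≤ 2√T` gives `(3/2)GD√T`.
-/

open RealInnerProductSpace Finset

lemma sum_Icc_one_div_sqrt_le (T : ℕ) : ∑ t ∈ Icc 1 T, 1 / Real.sqrt t ≤ 2 * Real.sqrt T := by
  induction T with
  | zero => simp
  | succ n ih =>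
    rw [sum_Icc_succ_top (by omega)]
    have hs : 0 < Real.sqrt (n + 1) := Real.sqrt_pos.2 (by positivity)
    have hmono : Real.sqrt n ≤ Real.sqrt (n + 1) := Real.sqrt_le_sqrt (by linarith)
    have hsq : Real.sqrt (n + 1) ^ 2 = n + 1 := Real.sq_sqrt (by positivity)
    have hsq' : Real.sqrt n ^ 2 = n := Real.sq_sqrt (by positivity)
    have hstep : 1 / Real.sqrt (n + 1) ≤ 2 * Real.sqrt (n + 1) - 2 * Real.sqrt n := by
      rw [div_le_iff₀ hs]
      nlinarith [sq_nonneg (Real.sqrt (n + 1) - Real.sqrt n)]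
    push_cast
    linarith

lemma sum_Icc_sub_mul_le {a c : ℕ → ℝ} {B : ℝ} (hc : Monotone c) (hc0 : 0 ≤ c 0) :
    ∀ T : ℕ, (∀ t ∈ Icc 1 (T + 1), a t ≤ B) →
      ∑ t ∈ Icc 1 T, (a t - a (t + 1)) * c t ≤ (B - a (T + 1)) * c T := by
  intro T
  induction T with
  | zero =>
    intro ha
    simpa using mul_nonneg (sub_nonneg.2 (ha 1 (by simp))) hc0
  | succ n ih =>
    intro ha
    rw [sum_Icc_succ_top (by omega)]
    have hprev := ih fun t ht => ha t (Icc_subset_Icc_right (by omega) ht)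
    have hweight := mul_le_mul_of_nonneg_left (hc n.le_succ) (sub_nonneg.2 (ha (n + 1) (by simp)))
    linarith

section
variable {E : Type*} [NormedAddCommGroup E] [InnerProductSpace ℝ E]

lemma two_mul_inner_le_of_norm_le_norm_sub_smul {u v w : E} {η : ℝ} (h : ‖v‖ ≤ ‖u - η • w‖) :
    2 * η * ⟪w, u⟫ ≤ ‖u‖ ^ 2 - ‖v‖ ^ 2 + η ^ 2 * ‖w‖ ^ 2 := by
  have hsq := pow_le_pow_left₀ (norm_nonneg _) h 2
  rw [norm_sub_sq_real, real_inner_smul_right, norm_smul, mul_pow, Real.norm_eq_abs, sq_abs]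
    at hsq
  rw [real_inner_comm]
  linarith

lemma inner_le_of_norm_le_norm_sub_smul_s5 {u v w : E} {η G : ℝ} (hη : 0 < η) (hw : ‖w‖ ≤ G)
    (h : ‖v‖ ≤ ‖u - η • w‖) : ⟪w, u⟫ ≤ (‖u‖ ^ 2 - ‖v‖ ^ 2) / (2 * η) + η * G ^ 2 / 2 := by
  have hstep := two_mul_inner_le_of_norm_le_norm_sub_smul h
  have hw2 : ‖w‖ ^ 2 ≤ G ^ 2 := pow_le_pow_left₀ (norm_nonneg _) hw 2
  have hη2 : η ^ 2 * ‖w‖ ^ 2 ≤ η ^ 2 * G ^ 2 := by gcongr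
  rw [div_add_div _ _ (by positivity) two_ne_zero, le_div_iff₀ (by positivity)]
  nlinarith

lemma sum_inner_le_of_norm_le_norm_sub_smul {x w : ℕ → E} {D G : ℝ} (hD : 0 < D) (hG : 0 < G)
    (T : ℕ) (hx : ∀ t ∈ Icc 1 (T + 1), ‖x t‖ ≤ D) (hw : ∀ t ∈ Icc 1 T, ‖w t‖ ≤ G)
    (hstep : ∀ t ∈ Icc 1 T, ‖x (t + 1)‖ ≤ ‖x t - (D / (G * Real.sqrt t)) • w t‖) :
    ∑ t ∈ Icc 1 T, ⟪w t, x t⟫ ≤ 3 / 2 * G * D * Real.sqrt T := by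
  set c : ℕ → ℝ := fun t => G * Real.sqrt t / D with hc
  have hround : ∀ t ∈ Icc 1 T, ⟪w t, x t⟫ ≤
      (‖x t‖ ^ 2 - ‖x (t + 1)‖ ^ 2) * c t / 2 + D * G / 2 * (1 / Real.sqrt t) := by
    intro t ht
    have hsqrt : 0 < Real.sqrt t := Real.sqrt_pos.2 (by exact_mod_cast (mem_Icc.1 ht).1)
    convert inner_le_of_norm_le_norm_sub_smul_s5 (by positivity) (hw t ht) (hstep t ht) using 1
    simp only [hc]
    field_simp
  have hc_mono : Monotone c := fun s t hst => by
    simp only [hc]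
    gcongr
  have habel := sum_Icc_sub_mul_le (a := fun t => ‖x t‖ ^ 2) (B := D ^ 2) hc_mono (by simp [hc]) T
    fun t ht => pow_le_pow_left₀ (norm_nonneg _) (hx t ht) 2
  have hlast : 0 ≤ ‖x (T + 1)‖ ^ 2 * c T := by positivity
  have hcT : D ^ 2 * c T = G * D * Real.sqrt T := by
    simp only [hc]
    field_simp
  calc ∑ t ∈ Icc 1 T, ⟪w t, x t⟫
      ≤ ∑ t ∈ Icc 1 T, ((‖x t‖ ^ 2 - ‖x (t + 1)‖ ^ 2) * c t / 2
          + D * G / 2 * (1 / Real.sqrt t)) := sum_le_sum hround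
    _ = (∑ t ∈ Icc 1 T, (‖x t‖ ^ 2 - ‖x (t + 1)‖ ^ 2) * c t) / 2
          + D * G / 2 * ∑ t ∈ Icc 1 T, 1 / Real.sqrt t := by
      rw [sum_add_distrib, sum_div, mul_sum]
    _ ≤ (D ^ 2 - ‖x (T + 1)‖ ^ 2) * c T / 2 + D * G / 2 * (2 * Real.sqrt T) := by
      gcongr
      exact sum_Icc_one_div_sqrt_le T
    _ ≤ 3 / 2 * G * D * Real.sqrt T := by nlinarith

lemma sub_le_inner_add_of_strongly_convex {K : Set E} {f : E → ℝ} {g : E → E} {lam G : ℝ}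
    (hlam : 0 ≤ lam) (hsc : ∀ μ ∈ K, ∀ μ₀ ∈ K, f μ - f μ₀ ≤ ⟪g μ, μ - μ₀⟫ - lam * ‖μ - μ₀‖ ^ 2)
    (hG : ∀ x ∈ K, ‖g x‖ ≤ G) {x y z : E} (hx : x ∈ K) (hy : y ∈ K) (hz : z ∈ K) :
    f x - f z ≤ ⟪g x, x - y⟫ + (G * ‖z - y‖ - lam * ‖z - y‖ ^ 2) := by
  have hxy := hsc x hx y hy
  have hyz := hsc y hy z hz
  have hinner : ⟪g y, y - z⟫ ≤ G * ‖y - z‖ :=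
    (real_inner_le_norm _ _).trans (mul_le_mul_of_nonneg_right (hG y hy) (norm_nonneg _))
  rw [norm_sub_rev y] at hyz hinner
  have hsq : 0 ≤ lam * ‖x - y‖ ^ 2 := by positivity
  linarith

end

theorem dogd_dynamic_regret_general {E : Type*} [NormedAddCommGroup E] [InnerProductSpace ℝ E]
    (K : Set E) (D : ℝ) (hD : 0 < D)
    (hdiam : ∀ x ∈ K, ∀ y ∈ K, ‖x - y‖ ≤ D)
    (T : ℕ) (lam G : ℝ) (hlam : 0 < lam) (hG : 0 < G)
    (ℓ : ℕ → E → ℝ) (g : ℕ → E → E)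
    (hsc : ∀ t ∈ Icc 1 T, ∀ μ ∈ K, ∀ μ₀ ∈ K,
      ℓ t μ - ℓ t μ₀ ≤ ⟪g t μ, μ - μ₀⟫ - lam * ‖μ - μ₀‖ ^ 2)
    (hGb : ∀ t ∈ Icc 1 T, ∀ x ∈ K, ‖g t x‖ ≤ G)
    (μstar : ℕ → E)
    (ν : ℕ → E) (hνK : ∀ t ∈ Icc 1 (T + 1), ν t ∈ K)
    (hνgood : ∀ t ∈ Icc 1 T,
      ℓ t (ν (t + 1)) - ℓ t (μstar t) ≤ G ^ 2 / lam * (1 + Real.log (1 + T)) / Real.sqrt T)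
    (p : ℕ → E) (hpK : ∀ t ∈ Icc 1 (T + 1), p t ∈ K)
    (hadj : ∀ t ∈ Icc 1 T,
      ‖p (t + 1) - ν (t + 1)‖ ≤ ‖(p t - (D / (G * Real.sqrt t)) • g t (p t)) - ν t‖) :
    ∑ t ∈ Icc 1 T, ℓ t (p t) - ∑ t ∈ Icc 1 T, ℓ t (μstar t) ≤
      G * ∑ t ∈ Icc 1 T, ‖ν (t + 1) - ν t‖ - lam * ∑ t ∈ Icc 1 T, ‖ν (t + 1) - ν t‖ ^ 2
        + 3 / 2 * G * D * Real.sqrt T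
        + G ^ 2 / lam * (1 + Real.log (1 + T)) * Real.sqrt T := by
  set C := G ^ 2 / lam * (1 + Real.log (1 + T))
  have hmem : ∀ t ∈ Icc 1 T, t ∈ Icc 1 (T + 1) ∧ t + 1 ∈ Icc 1 (T + 1) := fun t ht => by
    simp only [mem_Icc] at ht ⊢
    omega
  have hround : ∀ t ∈ Icc 1 T, ℓ t (p t) - ℓ t (μstar t) ≤ ⟪g t (p t), p t - ν t⟫
      + (G * ‖ν (t + 1) - ν t‖ - lam * ‖ν (t + 1) - ν t‖ ^ 2) + C / Real.sqrt T := fun t ht => by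
    have hstep := sub_le_inner_add_of_strongly_convex hlam.le (hsc t ht) (hGb t ht)
      (hpK t (hmem t ht).1) (hνK t (hmem t ht).1) (hνK (t + 1) (hmem t ht).2)
    linarith [hνgood t ht]
  have hogd : ∑ t ∈ Icc 1 T, ⟪g t (p t), p t - ν t⟫ ≤ 3 / 2 * G * D * Real.sqrt T :=
    sum_inner_le_of_norm_le_norm_sub_smul hD hG T
      (fun t ht => hdiam _ (hpK t ht) _ (hνK t ht))
      (fun t ht => hGb t ht _ (hpK t (hmem t ht).1))
      (fun t ht => by rw [sub_right_comm]; exact hadj t ht)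
  have hconst : ∑ _t ∈ Icc 1 T, C / Real.sqrt T = C * Real.sqrt T := by
    rw [sum_const, Nat.card_Icc, add_tsub_cancel_right, nsmul_eq_mul, mul_div_left_comm,
      Real.div_sqrt]
  rw [← sum_sub_distrib]
  grw [sum_le_sum hround]
  rw [sum_add_distrib, sum_add_distrib, sum_sub_distrib, ← mul_sum, ← mul_sum, hconst]
  linarith

/-- Theorem 1 (dynamic regret of Dynamic OGD against the true minimisers): with step sizes
`η_t = D/(G√t)`, advice `ν` satisfying the CONSTRUCT guarantee
`ℓ_t(ν_{t+1}) − ℓ_t(μ*_t) ≤ (G²/λ)(1 + log(1+T))/√T` and predictors satisfying the ADJUST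
contraction, the dynamic regret against the minimisers `μ*_t` is bounded by
`G·P_T(ν) − λ·S_T(ν) + (3/2)GD√T + (G²/λ)(1 + log(1+T))√T`. -/
theorem dogd_dynamic_regret {E : Type*} [NormedAddCommGroup E] [InnerProductSpace ℝ E]
    [CompleteSpace E]
    (K : Set E) (hK : Convex ℝ K) (D : ℝ) (hD : 0 < D)
    (hdiam : ∀ x ∈ K, ∀ y ∈ K, ‖x - y‖ ≤ D)
    (T : ℕ) (hT : 1 ≤ T) (lam G : ℝ) (hlam : 0 < lam) (hG : 0 < G)
    (ℓ : ℕ → E → ℝ) (g : ℕ → E → E)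
    (hdiff : ∀ t, ∀ x : E, HasGradientAt (ℓ t) (g t x) x)
    (hsc : ∀ t ∈ Icc 1 T, ∀ μ ∈ K, ∀ μ₀ ∈ K,
      ℓ t μ - ℓ t μ₀ ≤ ⟪g t μ, μ - μ₀⟫ - lam * ‖μ - μ₀‖ ^ 2)
    (hGb : ∀ t ∈ Icc 1 T, ∀ x ∈ K, ‖g t x‖ ≤ G)
    (μstar : ℕ → E) (hμstarK : ∀ t ∈ Icc 1 T, μstar t ∈ K)
    (hmin : ∀ t ∈ Icc 1 T, ∀ y ∈ K, ℓ t (μstar t) ≤ ℓ t y)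
    (ν : ℕ → E) (hνK : ∀ t ∈ Icc 1 (T + 1), ν t ∈ K)
    (hνgood : ∀ t ∈ Icc 1 T,
      ℓ t (ν (t + 1)) - ℓ t (μstar t) ≤ G ^ 2 / lam * (1 + Real.log (1 + T)) / Real.sqrt T)
    (p : ℕ → E) (hpK : ∀ t ∈ Icc 1 (T + 1), p t ∈ K)
    (hadj : ∀ t ∈ Icc 1 T,
      ‖p (t + 1) - ν (t + 1)‖ ≤ ‖(p t - (D / (G * Real.sqrt t)) • g t (p t)) - ν t‖) :
    ∑ t ∈ Icc 1 T, ℓ t (p t) - ∑ t ∈ Icc 1 T, ℓ t (μstar t) ≤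
      G * ∑ t ∈ Icc 1 T, ‖ν (t + 1) - ν t‖ - lam * ∑ t ∈ Icc 1 T, ‖ν (t + 1) - ν t‖ ^ 2
        + 3 / 2 * G * D * Real.sqrt T
        + G ^ 2 / lam * (1 + Real.log (1 + T)) * Real.sqrt T :=
  dogd_dynamic_regret_general K D hD hdiam T lam G hlam hG ℓ g hsc hGb μstar ν hνK hνgood p hpK hadj
end

section
/- Let K ⊆ ℝ^d be a convex set of diameter at most D > 0, T ≥ 1, α, G > 0, and let ℓ₁, …, ℓ_T : ℝ^d → ℝ be differentiable. Set γ := (1/2)·min(1/(G·D), α) and ε := 1/(γ²D²). Let μ̂₁, …, μ̂_{T+1} ∈ K and ν₁, …, ν_{T+1} ∈ K. Write ∇_t := ∇ℓ_t(μ̂_t), and define A₀ := ε·I_d, A_t := A_{t−1} + ∇_t∇_tᵀ, and μ̂_{temp,t+1} := μ̂_t − (1/γ)·A_t⁻¹∇_t. Assume: (i) ‖∇_t‖ ≤ G for all t; (ii) for every t and every x ∈ K, ℓ_t(x) ≥ ℓ_t(μ̂_t) + ⟨∇_t, x − μ̂_t⟩ + (γ/2)⟨∇_t, x − μ̂_t⟩²;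 (iii) for every 1 ≤ t ≤ T, the ADJUST contraction (μ̂_{t+1} − ν_{t+1})ᵀ A_t (μ̂_{t+1} − ν_{t+1}) ≤ (μ̂_{temp,t+1} − ν_t)ᵀ A_t (μ̂_{temp,t+1} − ν_t). Then Σ_{t=1}^{T} (ℓ_t(μ̂_t) − ℓ_t(ν_t)) ≤ (1/α + G·D)·(1 + Σ_{t=1}^{T} ∇_tᵀ A_t⁻¹ ∇_t). -/
/-!
With `w_t := μ̂_t − ν_t`, the exp-concavity bound at `x = ν_t` gives
`ℓ_t(μ̂_t) − ℓ_t(ν_t) ≤ a_t − (γ/2) a_t²` where `a_t := ⟨∇_t, w_t⟩`. Expanding the ADJUST contraction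
`‖w_{t+1}‖²_{A_t} ≤ ‖w_t − γ⁻¹A_t⁻¹∇_t‖²_{A_t}` and splitting `A_t = A_{t−1} + ∇_t∇_tᵀ` shows
`a_t − (γ/2) a_t² ≤ (γ/2)(‖w_t‖²_{A_{t−1}} − ‖w_{t+1}‖²_{A_t}) + (1/2γ) ∇_tᵀA_t⁻¹∇_t`.
Summing, the potentials telescope to at most `(γ/2) ε ‖w_1‖² ≤ 1/(2γ)`, and
`1/(2γ) = max(GD, 1/α) ≤ 1/α + GD`.
-/

open Matrix RealInnerProductSpace Finset

theorem Finset.sum_Icc_one_sub_pred {M : Type*} [AddCommGroup M] (Φ : ℕ → M) (T : ℕ) :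
    ∑ t ∈ Icc 1 T, (Φ (t - 1) - Φ t) = Φ 0 - Φ T := by
  induction T with
  | zero => simp
  | succ T ih => rw [sum_Icc_succ_top (by omega), ih, Nat.add_sub_cancel]; abel

theorem one_div_min_le_one_div_add_one_div {a b : ℝ} (ha : 0 < a) (hb : 0 < b) :
    1 / min a b ≤ 1 / a + 1 / b := by
  rcases min_cases a b with ⟨h, -⟩ | ⟨h, -⟩ <;> rw [h] <;>
    linarith [one_div_pos.2 ha, one_div_pos.2 hb]

theorem sub_le_inner_sub_sq_of_quadratic_lower_bound {E : Type*} [NormedAddCommGroup E]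
    [InnerProductSpace ℝ E] {f : E → ℝ} {u p x : E} {γ : ℝ}
    (h : f p + ⟪u, x - p⟫ + γ / 2 * ⟪u, x - p⟫ ^ 2 ≤ f x) :
    f p - f x ≤ ⟪u, p - x⟫ - γ / 2 * ⟪u, p - x⟫ ^ 2 := by
  rw [← neg_sub p x, inner_neg_right, neg_sq] at h
  linarith

theorem EuclideanSpace.real_inner_eq_dotProduct {ι : Type*} [Fintype ι]
    (x y : EuclideanSpace ℝ ι) : ⟪x, y⟫ = x.ofLp ⬝ᵥ y.ofLp := by
  simp [EuclideanSpace.inner_eq_star_dotProduct, dotProduct_comm]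

theorem EuclideanSpace.dotProduct_smul_one_mulVec {ι : Type*} [Fintype ι] [DecidableEq ι]
    (c : ℝ) (x : EuclideanSpace ℝ ι) :
    x.ofLp ⬝ᵥ (c • 1 : Matrix ι ι ℝ) *ᵥ x.ofLp = c * ‖x‖ ^ 2 := by
  rw [← real_inner_self_eq_norm_sq, real_inner_eq_dotProduct, smul_mulVec, one_mulVec,
    dotProduct_smul, smul_eq_mul]

namespace Matrix

variable {n : Type*} [Fintype n]

theorem dotProduct_vecMulVec_self_mulVec {R : Type*} [CommRing R] (v x : n → R) :
    x ⬝ᵥ vecMulVec v v *ᵥ x = (v ⬝ᵥ x) ^ 2 := by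
  simp [vecMulVec_mulVec, dotProduct_comm x v, sq]

theorem IsSymm.dotProduct_mulVec_comm {R : Type*} [CommRing R] {A : Matrix n n R}
    (hA : A.IsSymm) (x y : n → R) : x ⬝ᵥ A *ᵥ y = y ⬝ᵥ A *ᵥ x := by
  rw [dotProduct_mulVec, ← mulVec_transpose, hA.eq, dotProduct_comm]

theorem PosDef.add_vecMulVec_self {A : Matrix n n ℝ} (hA : A.PosDef) (v : n → ℝ) :
    (A + vecMulVec v v).PosDef := by
  simpa using hA.add_posSemidef (posSemidef_vecMulVec_self_star v)

theorem posDef_of_add_vecMulVec_self {A : ℕ → Matrix n n ℝ} {v : ℕ → n → ℝ} {T : ℕ}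
    (h0 : (A 0).PosDef) (hrec : ∀ t ∈ Icc 1 T, A t = A (t - 1) + vecMulVec (v t) (v t)) :
    ∀ t ≤ T, (A t).PosDef := by
  intro t
  induction t with
  | zero => exact fun _ => h0
  | succ t ih =>
    intro ht
    rw [hrec (t + 1) (mem_Icc.2 ⟨by omega, ht⟩), Nat.add_sub_cancel]
    exact (ih (by omega)).add_vecMulVec_self _

variable [DecidableEq n]

theorem dotProduct_sub_smul_inv_mulVec {R : Type*} [CommRing R] {A : Matrix n n R}
    (hA : A.IsSymm) (hdet : IsUnit A.det) (w v : n → R) (c : R) :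
    (w - c • A⁻¹ *ᵥ v) ⬝ᵥ A *ᵥ (w - c • A⁻¹ *ᵥ v) =
      w ⬝ᵥ A *ᵥ w - 2 * c * (v ⬝ᵥ w) + c ^ 2 * (v ⬝ᵥ A⁻¹ *ᵥ v) := by
  have hAA : A *ᵥ (A⁻¹ *ᵥ v) = v := by
    rw [mulVec_mulVec, mul_nonsing_inv _ hdet, one_mulVec]
  simp only [mulVec_sub, mulVec_smul, hAA, sub_dotProduct, dotProduct_sub, smul_dotProduct,
    dotProduct_smul, smul_eq_mul]
  rw [hA.dotProduct_mulVec_comm (A⁻¹ *ᵥ v) w, hAA, dotProduct_comm w v, dotProduct_comm _ v]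
  ring

theorem newton_step_potential_bound {A A' : Matrix n n ℝ} (hA' : A'.IsSymm)
    (hdet : IsUnit A'.det) {v w w' : n → ℝ} (hrec : A' = A + vecMulVec v v) {γ : ℝ} (hγ : 0 < γ)
    (hadj : w' ⬝ᵥ A' *ᵥ w' ≤
      (w - (1 / γ) • A'⁻¹ *ᵥ v) ⬝ᵥ A' *ᵥ (w - (1 / γ) • A'⁻¹ *ᵥ v)) :
    v ⬝ᵥ w - γ / 2 * (v ⬝ᵥ w) ^ 2 ≤
      γ / 2 * (w ⬝ᵥ A *ᵥ w - w' ⬝ᵥ A' *ᵥ w') + 1 / (2 * γ) * (v ⬝ᵥ A'⁻¹ *ᵥ v) := by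
  have hsplit : w ⬝ᵥ A' *ᵥ w = w ⬝ᵥ A *ᵥ w + (v ⬝ᵥ w) ^ 2 := by
    rw [hrec, add_mulVec, dotProduct_add, dotProduct_vecMulVec_self_mulVec]
  rw [dotProduct_sub_smul_inv_mulVec hA' hdet, hsplit] at hadj
  have hγinv : γ * (1 / γ) = 1 := mul_one_div_cancel hγ.ne'
  linear_combination (γ / 2) * hadj + (1 / γ / 2 * (v ⬝ᵥ A'⁻¹ *ᵥ v) - v ⬝ᵥ w) * hγinv

end Matrix

theorem sum_le_mul_one_add_sum_of_telescoping {T : ℕ} {f r Φ : ℕ → ℝ} {c b B : ℝ}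
    (hc : 0 ≤ c) (hstep : ∀ t ∈ Icc 1 T, f t ≤ c * (Φ (t - 1) - Φ t) + b * r t)
    (hΦ0 : c * Φ 0 ≤ b) (hΦT : 0 ≤ Φ T) (hr : ∀ t ∈ Icc 1 T, 0 ≤ r t) (hbB : b ≤ B) :
    ∑ t ∈ Icc 1 T, f t ≤ B * (1 + ∑ t ∈ Icc 1 T, r t) := by
  have hr_sum : 0 ≤ ∑ t ∈ Icc 1 T, r t := sum_nonneg hr
  calc ∑ t ∈ Icc 1 T, f t
      ≤ ∑ t ∈ Icc 1 T, (c * (Φ (t - 1) - Φ t) + b * r t) := sum_le_sum hstep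
    _ = c * (Φ 0 - Φ T) + b * ∑ t ∈ Icc 1 T, r t := by
      rw [sum_add_distrib, ← mul_sum, ← mul_sum, sum_Icc_one_sub_pred]
    _ ≤ b * (1 + ∑ t ∈ Icc 1 T, r t) := by nlinarith
    _ ≤ B * (1 + ∑ t ∈ Icc 1 T, r t) := by gcongr

theorem dons_regret_lemma_general {d : ℕ}
    (K : Set (EuclideanSpace ℝ (Fin d)))
    (D : ℝ) (hD : 0 < D) (hdiam : ∀ x ∈ K, ∀ y ∈ K, ‖x - y‖ ≤ D)
    (T : ℕ) (α G : ℝ) (hα : 0 < α) (hG : 0 < G)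
    (ℓ : ℕ → EuclideanSpace ℝ (Fin d) → ℝ)
    (g : ℕ → EuclideanSpace ℝ (Fin d) → EuclideanSpace ℝ (Fin d))
    (γ ε : ℝ) (hγ : γ = 1 / 2 * min (1 / (G * D)) α) (hε : ε = 1 / (γ ^ 2 * D ^ 2))
    (p ν : ℕ → EuclideanSpace ℝ (Fin d))
    (hpK : ∀ t ∈ Icc 1 (T + 1), p t ∈ K) (hνK : ∀ t ∈ Icc 1 (T + 1), ν t ∈ K)
    (A : ℕ → Matrix (Fin d) (Fin d) ℝ)
    (hA0 : A 0 = ε • 1)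
    (hArec : ∀ t ∈ Icc 1 T,
      A t = A (t - 1) + Matrix.vecMulVec (g t (p t) : Fin d → ℝ) (g t (p t) : Fin d → ℝ))
    (hexp : ∀ t ∈ Icc 1 T, ∀ x ∈ K,
      ℓ t (p t) + ⟪g t (p t), x - p t⟫ + γ / 2 * ⟪g t (p t), x - p t⟫ ^ 2 ≤ ℓ t x)
    (hadj : ∀ t ∈ Icc 1 T,
      (p (t + 1) - ν (t + 1)) ⬝ᵥ (A t).mulVec (p (t + 1) - ν (t + 1)) ≤
      ((p t - (1 / γ) • (EuclideanSpace.equiv (Fin d) ℝ).symm ((A t)⁻¹.mulVec (g t (p t)))) - ν t)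
        ⬝ᵥ (A t).mulVec
          ((p t - (1 / γ) • (EuclideanSpace.equiv (Fin d) ℝ).symm ((A t)⁻¹.mulVec (g t (p t))))
            - ν t)) :
    ∑ t ∈ Icc 1 T, (ℓ t (p t) - ℓ t (ν t)) ≤
      (1 / α + G * D) * (1 + ∑ t ∈ Icc 1 T, g t (p t) ⬝ᵥ (A t)⁻¹.mulVec (g t (p t))) := by
  have hγ_pos : 0 < γ := by rw [hγ]; positivity
  have hε_pos : 0 < ε := by rw [hε]; positivity
  have hA : ∀ t ≤ T, (A t).PosDef :=
    posDef_of_add_vecMulVec_self (hA0 ▸ PosDef.one.smul hε_pos) hArec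
  let w : ℕ → Fin d → ℝ := fun t => (p t).ofLp - (ν t).ofLp
  refine sum_le_mul_one_add_sum_of_telescoping (c := γ / 2) (b := 1 / (2 * γ))
    (Φ := fun t => w (t + 1) ⬝ᵥ A t *ᵥ w (t + 1)) (by positivity) (fun t ht => ?_) ?_
    (by simpa using (hA T le_rfl).posSemidef.dotProduct_mulVec_nonneg (w (T + 1)))
    (fun t ht => by
      simpa using (hA t (mem_Icc.1 ht).2).inv.posSemidef.dotProduct_mulVec_nonneg _) ?_
  · obtain ⟨ht1, htT⟩ := mem_Icc.1 ht
    have hloss := sub_le_inner_sub_sq_of_quadratic_lower_bound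
      (hexp t ht (ν t) (hνK t (mem_Icc.2 ⟨ht1, by omega⟩)))
    rw [EuclideanSpace.real_inner_eq_dotProduct, WithLp.ofLp_sub] at hloss
    have hadj_t := hadj t ht
    simp only [WithLp.ofLp_sub, WithLp.ofLp_smul, PiLp.continuousLinearEquiv_symm_apply,
      sub_right_comm _ _ (ν t).ofLp] at hadj_t
    have hpot := newton_step_potential_bound (by simpa using (hA t htT).isHermitian)
      ((isUnit_iff_isUnit_det _).1 (hA t htT).isUnit) (hArec t ht) hγ_pos hadj_t
    simp only [Nat.sub_add_cancel ht1]
    linarith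
  · have hw1 : ‖p 1 - ν 1‖ ≤ D :=
      hdiam _ (hpK 1 (mem_Icc.2 ⟨le_rfl, by omega⟩)) _ (hνK 1 (mem_Icc.2 ⟨le_rfl, by omega⟩))
    have hεD : ε * D ^ 2 = 1 / γ ^ 2 := by rw [hε]; field_simp
    calc γ / 2 * (w 1 ⬝ᵥ A 0 *ᵥ w 1) = γ / 2 * (ε * ‖p 1 - ν 1‖ ^ 2) := by
          rw [hA0, ← EuclideanSpace.dotProduct_smul_one_mulVec]; rfl
      _ ≤ γ / 2 * (ε * D ^ 2) := by gcongr
      _ = 1 / (2 * γ) := by rw [hεD]; field_simp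
  · have h2γ : 2 * γ = min (1 / (G * D)) α := by rw [hγ]; ring
    simpa [h2γ, add_comm] using
      one_div_min_le_one_div_add_one_div (by positivity : 0 < 1 / (G * D)) hα

/-- Lemma `dynamic_ONS`: for losses satisfying the exp-concavity quadratic lower bound with
parameter `γ = (1/2)min(1/(GD), α)`, matrices `A₀ = ε I`, `A_t = A_{t−1} + ∇_t∇_tᵀ` with
`ε = 1/(γ²D²)`, and predictors satisfying the ADJUST contraction in the `A_t`-norm against the
Newton-step candidates `μ̂_t − (1/γ)A_t⁻¹∇_t`, the regret against the advice `ν` is at most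
`(1/α + GD)(1 + Σ_t ∇_tᵀA_t⁻¹∇_t)`. -/
theorem dons_regret_lemma {d : ℕ}
    (K : Set (EuclideanSpace ℝ (Fin d))) (hK : Convex ℝ K)
    (D : ℝ) (hD : 0 < D) (hdiam : ∀ x ∈ K, ∀ y ∈ K, ‖x - y‖ ≤ D)
    (T : ℕ) (hT : 1 ≤ T) (α G : ℝ) (hα : 0 < α) (hG : 0 < G)
    (ℓ : ℕ → EuclideanSpace ℝ (Fin d) → ℝ)
    (g : ℕ → EuclideanSpace ℝ (Fin d) → EuclideanSpace ℝ (Fin d))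
    (hdiff : ∀ t, ∀ x, HasGradientAt (ℓ t) (g t x) x)
    (γ ε : ℝ) (hγ : γ = 1 / 2 * min (1 / (G * D)) α) (hε : ε = 1 / (γ ^ 2 * D ^ 2))
    (p ν : ℕ → EuclideanSpace ℝ (Fin d))
    (hpK : ∀ t ∈ Icc 1 (T + 1), p t ∈ K) (hνK : ∀ t ∈ Icc 1 (T + 1), ν t ∈ K)
    (A : ℕ → Matrix (Fin d) (Fin d) ℝ)
    (hA0 : A 0 = ε • 1)
    (hArec : ∀ t ∈ Icc 1 T,
      A t = A (t - 1) + Matrix.vecMulVec (g t (p t) : Fin d → ℝ) (g t (p t) : Fin d → ℝ))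
    (hGb : ∀ t ∈ Icc 1 T, ‖g t (p t)‖ ≤ G)
    (hexp : ∀ t ∈ Icc 1 T, ∀ x ∈ K,
      ℓ t (p t) + ⟪g t (p t), x - p t⟫ + γ / 2 * ⟪g t (p t), x - p t⟫ ^ 2 ≤ ℓ t x)
    (hadj : ∀ t ∈ Icc 1 T,
      (p (t + 1) - ν (t + 1)) ⬝ᵥ (A t).mulVec (p (t + 1) - ν (t + 1)) ≤
      ((p t - (1 / γ) • (EuclideanSpace.equiv (Fin d) ℝ).symm ((A t)⁻¹.mulVec (g t (p t)))) - ν t)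
        ⬝ᵥ (A t).mulVec
          ((p t - (1 / γ) • (EuclideanSpace.equiv (Fin d) ℝ).symm ((A t)⁻¹.mulVec (g t (p t))))
            - ν t)) :
    ∑ t ∈ Icc 1 T, (ℓ t (p t) - ℓ t (ν t)) ≤
      (1 / α + G * D) * (1 + ∑ t ∈ Icc 1 T, g t (p t) ⬝ᵥ (A t)⁻¹.mulVec (g t (p t))) :=
  dons_regret_lemma_general K D hD hdiam T α G hα hG ℓ g γ ε hγ hε p ν hpK hνK A hA0 hArec hexp hadj
end

section
/- Let E be a real inner product space and K ⊆ E a convex set of diameter at most D > 0. Let T ≥ 1, G > 0, and ℓ₁, …, ℓ_T : E → ℝ differentiable convex functions (ℓ_t(y) ≥ ℓ_t(x) + ⟨∇ℓ_t(x), y − x⟩ for x, y ∈ K) with ‖∇ℓ_t(x)‖ ≤ G for x ∈ K. Let η₁ ≥ η₂ ≥ … ≥ η_T > 0. Let μ̂₁ ∈ K and define, for 1 ≤ t ≤ T, μ̂_{t+1} as a metric projection onto K of μ̂_t − η_t∇ℓ_t(μ̂_t). Let μ₁, …, μ_{T+1} ∈ K be arbitrary comparators and define Perf(t) := ⟨μ̂_{t+1}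 − (μ_t + μ_{t+1})/2, μ_{t+1} − μ_t⟩. Then Σ_{t=1}^{T} ℓ_t(μ̂_t) − Σ_{t=1}^{T} ℓ_t(μ_t) ≤ D²/(2η_T) + (G²/2)·Σ_{t=1}^{T} η_t − Σ_{t=1}^{T} Perf(t)/η_t. -/
/-!
Projecting `μ̂_t − η_t ∇ℓ_t(μ̂_t)` onto the convex set `K` does not increase its distance to the
comparator `μ_t`, so convexity gives the one-step bound
`ℓ_t(μ̂_t) − ℓ_t(μ_t) ≤ (‖μ̂_t − μ_t‖² − ‖μ̂_{t+1} − μ_t‖²)/(2η_t) + η_t‖∇ℓ_t(μ̂_t)‖²/2`.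
Replacing the comparator `μ_t` by `μ_{t+1}` lowers the squared distance by exactly `2 Perf(t)`,
after which the distance terms telescope; with nonincreasing step sizes their sum is at most
`D²/(2η_T)`.
-/

open RealInnerProductSpace Finset

section

variable {E : Type*} [NormedAddCommGroup E] [InnerProductSpace ℝ E]

theorem norm_sub_sq_sub_norm_sub_sq_eq_two_mul_inner_midpoint (x u u' : E) :
    ‖x - u‖ ^ 2 - ‖x - u'‖ ^ 2 = 2 * ⟪x - (2 : ℝ)⁻¹ • (u + u'), u' - u⟫ := by
  have h : x - u = (x - (2 : ℝ)⁻¹ • (u + u')) + (2 : ℝ)⁻¹ • (u' - u) := by module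
  have h' : x - u' = (x - (2 : ℝ)⁻¹ • (u + u')) - (2 : ℝ)⁻¹ • (u' - u) := by module
  rw [h, h']
  generalize x - (2 : ℝ)⁻¹ • (u + u') = m
  rw [norm_add_sq_real, norm_sub_sq_real, real_inner_smul_right]
  ring

namespace IsMetricProjection

variable {K : Set E} {z q y : E}

theorem inner_sub_sub_nonpos (hK : Convex ℝ K) (hq : IsMetricProjection K z q) (hy : y ∈ K) :
    ⟪z - q, y - q⟫ ≤ 0 := by
  have : Nonempty K := ⟨⟨q, hq.1⟩⟩
  have hbdd : BddBelow (Set.range fun w : K ↦ ‖z - w‖) := ⟨0, by rintro _ ⟨w, rfl⟩; positivity⟩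
  have hinf : ‖z - q‖ = ⨅ w : K, ‖z - w‖ :=
    le_antisymm (le_ciInf fun w ↦ hq.2 w w.2) (ciInf_le hbdd ⟨q, hq.1⟩)
  exact (norm_eq_iInf_iff_real_inner_le_zero hK hq.1).mp hinf y hy

theorem norm_sub_le (hK : Convex ℝ K) (hq : IsMetricProjection K z q) (hy : y ∈ K) :
    ‖q - y‖ ≤ ‖z - y‖ := by
  have hobtuse : 0 ≤ ⟪z - q, q - y⟫ := by
    rw [← neg_sub y q, inner_neg_right]
    linarith [hq.inner_sub_sub_nonpos hK hy]
  have hsq : ‖q - y‖ ^ 2 ≤ ‖z - y‖ ^ 2 := by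
    rw [show z - y = (z - q) + (q - y) by abel, norm_add_sq_real]
    nlinarith [sq_nonneg ‖z - q‖]
  exact (sq_le_sq₀ (norm_nonneg _) (norm_nonneg _)).mp hsq

variable {x x' v u u' : E} {η : ℝ}

theorem two_mul_inner_le_of_gradient_step (hK : Convex ℝ K)
    (hx' : IsMetricProjection K (x - η • v) x') (hu : u ∈ K) :
    2 * η * ⟪v, x - u⟫ ≤ ‖x - u‖ ^ 2 - ‖x' - u‖ ^ 2 + η ^ 2 * ‖v‖ ^ 2 := by
  have hdist : ‖x' - u‖ ^ 2 ≤ ‖(x - u) - η • v‖ ^ 2 := by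
    rw [show (x - u) - η • v = x - η • v - u by abel]
    gcongr
    exact hx'.norm_sub_le hK hu
  rw [norm_sub_sq_real (x := x - u), real_inner_smul_right, norm_smul, mul_pow, Real.norm_eq_abs,
    sq_abs, real_inner_comm] at hdist
  linarith

theorem inner_le_of_gradient_step (hK : Convex ℝ K) (hη : 0 < η)
    (hx' : IsMetricProjection K (x - η • v) x') (hu : u ∈ K) :
    ⟪v, x - u⟫ ≤ (‖x - u‖ ^ 2 - ‖x' - u'‖ ^ 2) / (2 * η) + η / 2 * ‖v‖ ^ 2
      - ⟪x' - (2 : ℝ)⁻¹ • (u + u'), u' - u⟫ / η := by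
  have hstep := hx'.two_mul_inner_le_of_gradient_step hK hu
  have hshift := norm_sub_sq_sub_norm_sub_sq_eq_two_mul_inner_midpoint x' u u'
  rw [show (‖x - u‖ ^ 2 - ‖x' - u'‖ ^ 2) / (2 * η) + η / 2 * ‖v‖ ^ 2
      - ⟪x' - (2 : ℝ)⁻¹ • (u + u'), u' - u⟫ / η
      = (‖x - u‖ ^ 2 - ‖x' - u'‖ ^ 2 + η ^ 2 * ‖v‖ ^ 2
        - 2 * ⟪x' - (2 : ℝ)⁻¹ • (u + u'), u' - u⟫) / (2 * η) by field_simp,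
    le_div_iff₀ (by positivity)]
  linarith

theorem sub_le_of_gradient_step {f : E → ℝ} {G : ℝ} (hK : Convex ℝ K) (hη : 0 < η)
    (hx' : IsMetricProjection K (x - η • v) x') (hu : u ∈ K)
    (hsubgrad : f x + ⟪v, u - x⟫ ≤ f u) (hv : ‖v‖ ≤ G) :
    f x - f u ≤ (‖x - u‖ ^ 2 - ‖x' - u'‖ ^ 2) / (2 * η) + G ^ 2 / 2 * η
      - ⟪x' - (2 : ℝ)⁻¹ • (u + u'), u' - u⟫ / η := by
  rw [← neg_sub x u, inner_neg_right] at hsubgrad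
  have hstep := hx'.inner_le_of_gradient_step (u' := u') hK hη hu
  have hgrad : η / 2 * ‖v‖ ^ 2 ≤ G ^ 2 / 2 * η :=
    calc η / 2 * ‖v‖ ^ 2 ≤ η / 2 * G ^ 2 := by gcongr
      _ = G ^ 2 / 2 * η := by ring
  linarith

end IsMetricProjection

end

theorem sum_Icc_sub_div_le_of_antitone {a w : ℕ → ℝ} {B : ℝ} {T : ℕ} (hT : 1 ≤ T)
    (ha : ∀ t ∈ Icc 1 T, a t ≤ B) (hw : ∀ t ∈ Icc 1 T, 0 < w t)
    (hmono : ∀ t, 1 ≤ t → t < T → w (t + 1) ≤ w t) :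
    ∑ t ∈ Icc 1 T, (a t - a (t + 1)) / w t ≤ (B - a (T + 1)) / w T := by
  induction T, hT using Nat.le_induction with
  | base =>
    rw [Icc_self, sum_singleton]
    gcongr
    · exact (hw 1 (by simp)).le
    · exact ha 1 (by simp)
  | succ n hn ih =>
    have hIcc : Icc 1 n ⊆ Icc 1 (n + 1) := Icc_subset_Icc_right (by omega)
    have hsum := ih (fun t ht ↦ ha t (hIcc ht)) (fun t ht ↦ hw t (hIcc ht))
      (fun t h1 h2 ↦ hmono t h1 (by omega))
    have hdecay : (B - a (n + 1)) / w n ≤ (B - a (n + 1)) / w (n + 1) :=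
      div_le_div_of_nonneg_left (by linarith [ha (n + 1) (by simp)]) (hw (n + 1) (by simp))
        (hmono n hn (by omega))
    calc ∑ t ∈ Icc 1 (n + 1), (a t - a (t + 1)) / w t
        = ∑ t ∈ Icc 1 n, (a t - a (t + 1)) / w t + (a (n + 1) - a (n + 2)) / w (n + 1) :=
          sum_Icc_succ_top (by omega) _
      _ ≤ (B - a (n + 1)) / w (n + 1) + (a (n + 1) - a (n + 2)) / w (n + 1) := by linarith
      _ = (B - a (n + 2)) / w (n + 1) := by rw [← add_div]; ring_nf

theorem ogd_regret_performance_general {E : Type*} [NormedAddCommGroup E] [InnerProductSpace ℝ E]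
    (K : Set E) (hK : Convex ℝ K) (D : ℝ)
    (hdiam : ∀ x ∈ K, ∀ y ∈ K, ‖x - y‖ ≤ D)
    (T : ℕ) (hT : 1 ≤ T) (G : ℝ)
    (ℓ : ℕ → E → ℝ) (g : ℕ → E → E)
    (hconv : ∀ t ∈ Icc 1 T, ∀ x ∈ K, ∀ y ∈ K, ℓ t x + ⟪g t x, y - x⟫ ≤ ℓ t y)
    (hGb : ∀ t ∈ Icc 1 T, ∀ x ∈ K, ‖g t x‖ ≤ G)
    (η : ℕ → ℝ) (hηpos : ∀ t ∈ Icc 1 T, 0 < η t)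
    (hηmono : ∀ t, 1 ≤ t → t < T → η (t + 1) ≤ η t)
    (p : ℕ → E) (hp1 : p 1 ∈ K)
    (hiter : ∀ t ∈ Icc 1 T, p (t + 1) ∈ K ∧
      ∀ y ∈ K, ‖p t - η t • g t (p t) - p (t + 1)‖ ≤ ‖p t - η t • g t (p t) - y‖)
    (μ : ℕ → E) (hμK : ∀ t ∈ Icc 1 (T + 1), μ t ∈ K) :
    ∑ t ∈ Icc 1 T, ℓ t (p t) - ∑ t ∈ Icc 1 T, ℓ t (μ t) ≤
      D ^ 2 / (2 * η T) + G ^ 2 / 2 * ∑ t ∈ Icc 1 T, η t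
        - ∑ t ∈ Icc 1 T, ⟪p (t + 1) - (2 : ℝ)⁻¹ • (μ t + μ (t + 1)), μ (t + 1) - μ t⟫ / η t := by
  have hIcc : Icc 1 T ⊆ Icc 1 (T + 1) := Icc_subset_Icc_right (by omega)
  have hpK : ∀ t ∈ Icc 1 T, p t ∈ K := by
    rintro (_ | _ | t) ht
    · simp at ht
    · exact hp1
    · exact (hiter (t + 1) (by simp only [mem_Icc] at ht ⊢; omega)).1
  have htel := sum_Icc_sub_div_le_of_antitone (a := fun t ↦ ‖p t - μ t‖ ^ 2) (w := (2 * η ·))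
    (B := D ^ 2) hT
    (fun t ht ↦ pow_le_pow_left₀ (norm_nonneg _) (hdiam _ (hpK t ht) _ (hμK t (hIcc ht))) 2)
    (fun t ht ↦ by linarith [hηpos t ht]) (fun t h1 h2 ↦ by linarith [hηmono t h1 h2])
  have hlast : 0 ≤ ‖p (T + 1) - μ (T + 1)‖ ^ 2 / (2 * η T) := by
    have := hηpos T (by simp [hT]); positivity
  calc ∑ t ∈ Icc 1 T, ℓ t (p t) - ∑ t ∈ Icc 1 T, ℓ t (μ t)
      = ∑ t ∈ Icc 1 T, (ℓ t (p t) - ℓ t (μ t)) := (sum_sub_distrib _ _).symm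
    _ ≤ _ := sum_le_sum fun t ht ↦ IsMetricProjection.sub_le_of_gradient_step hK (hηpos t ht)
        (hiter t ht) (hμK t (hIcc ht)) (hconv t ht _ (hpK t ht) _ (hμK t (hIcc ht)))
        (hGb t ht _ (hpK t ht))
    _ = _ := by rw [sum_sub_distrib, sum_add_distrib, ← mul_sum]
    _ ≤ _ := by rw [sub_div] at htel; linarith

/-- Appendix theorem: dynamic regret of classical projected OGD with convex losses in terms of
the performances `Perf(t) = ⟨μ̂_{t+1} − (μ_t + μ_{t+1})/2, μ_{t+1} − μ_t⟩`:
`Σℓ_t(μ̂_t) − Σℓ_t(μ_t) ≤ D²/(2η_T) + (G²/2)Ση_t − Σ Perf(t)/η_t`. -/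
theorem ogd_regret_performance {E : Type*} [NormedAddCommGroup E] [InnerProductSpace ℝ E]
    [CompleteSpace E]
    (K : Set E) (hK : Convex ℝ K) (D : ℝ) (hD : 0 < D)
    (hdiam : ∀ x ∈ K, ∀ y ∈ K, ‖x - y‖ ≤ D)
    (T : ℕ) (hT : 1 ≤ T) (G : ℝ) (hG : 0 < G)
    (ℓ : ℕ → E → ℝ) (g : ℕ → E → E)
    (hdiff : ∀ t, ∀ x : E, HasGradientAt (ℓ t) (g t x) x)
    (hconv : ∀ t ∈ Icc 1 T, ∀ x ∈ K, ∀ y ∈ K, ℓ t x + ⟪g t x, y - x⟫ ≤ ℓ t y)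
    (hGb : ∀ t ∈ Icc 1 T, ∀ x ∈ K, ‖g t x‖ ≤ G)
    (η : ℕ → ℝ) (hηpos : ∀ t ∈ Icc 1 T, 0 < η t)
    (hηmono : ∀ t, 1 ≤ t → t < T → η (t + 1) ≤ η t)
    (p : ℕ → E) (hp1 : p 1 ∈ K)
    (hiter : ∀ t ∈ Icc 1 T, p (t + 1) ∈ K ∧
      ∀ y ∈ K, ‖p t - η t • g t (p t) - p (t + 1)‖ ≤ ‖p t - η t • g t (p t) - y‖)
    (μ : ℕ → E) (hμK : ∀ t ∈ Icc 1 (T + 1), μ t ∈ K) :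
    ∑ t ∈ Icc 1 T, ℓ t (p t) - ∑ t ∈ Icc 1 T, ℓ t (μ t) ≤
      D ^ 2 / (2 * η T) + G ^ 2 / 2 * ∑ t ∈ Icc 1 T, η t
        - ∑ t ∈ Icc 1 T, ⟪p (t + 1) - (2 : ℝ)⁻¹ • (μ t + μ (t + 1)), μ (t + 1) - μ t⟫ / η t :=
  ogd_regret_performance_general K hK D hdiam T hT G ℓ g hconv hGb η hηpos hηmono p hp1 hiter μ hμK
end

section
/- Let E be a real inner product space and K ⊆ E a convex set. Let T ≥ 1, λ, G > 0, and ℓ₁, …, ℓ_T : E → ℝ differentiable functions that are λ-strongly convex on K in the paper's convention (ℓ_t(μ) − ℓ_t(μ₀) ≤ ⟨∇ℓ_t(μ), μ − μ₀⟩ − λ‖μ − μ₀‖² for μ, μ₀ ∈ K) with ‖∇ℓ_t(x)‖ ≤ G for x ∈ K. Let η₁, …, η_T > 0 satisfy 1/η₁ ≤ λ and 1/η_t − λ ≤ 1/η_{t−1} for 2 ≤ t ≤ T. Let μ̂₁ ∈ K and define, for 1 ≤ t ≤ T, μ̂_{t+1} as a metric projection onto K of μ̂_t − η_t∇ℓ_t(μ̂_t).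 Let μ₁, …, μ_{T+1} ∈ K be arbitrary comparators and define Perf(t) := ⟨μ̂_{t+1} − (μ_t + μ_{t+1})/2, μ_{t+1} − μ_t⟩. Then Σ_{t=1}^{T} ℓ_t(μ̂_t) − Σ_{t=1}^{T} ℓ_t(μ_t) ≤ (G²/2)·Σ_{t=1}^{T} η_t − Σ_{t=1}^{T} Perf(t)/η_t. -/
open RealInnerProductSpace Finset

/-!
The projection onto a convex set moves a point closer to every point of the set, so one projected
gradient step bounds `⟪∇ℓ_t(μ̂_t), μ̂_t - μ_t⟫` by `(‖μ̂_t - μ_t‖² - ‖μ̂_{t+1} - μ_t‖²) / (2η_t)`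
plus `η_t ‖∇ℓ_t(μ̂_t)‖² / 2`. Expanding around the midpoint of `μ_t` and `μ_{t+1}` gives
`‖μ̂_{t+1} - μ_t‖² = ‖μ̂_{t+1} - μ_{t+1}‖² + 2 Perf(t)`, so with `a_t = ‖μ̂_t - μ_t‖²` the regret is
at most `∑ ((a_t - a_{t+1}) / (2η_t) - λ a_t) + (G²/2) ∑ η_t - ∑ Perf(t)/η_t`. Summing by parts, the
step condition makes the coefficient of every `a_t` in the first sum nonpositive.
-/

section Projection

variable {E : Type*} [NormedAddCommGroup E] [InnerProductSpace ℝ E]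

variable {K : Set E} {x v z q u w y : E}

theorem IsMetricProjection.inner_sub_nonpos_s13 (hK : Convex ℝ K) (hq : IsMetricProjection K z q)
    (hy : y ∈ K) : ⟪z - q, y - q⟫ ≤ 0 := by
  have : Nonempty K := ⟨⟨y, hy⟩⟩
  have hinf : ‖z - q‖ = ⨅ w : K, ‖z - w‖ :=
    le_antisymm (le_ciInf fun w => hq.2 w w.2)
      (ciInf_le ⟨0, Set.forall_mem_range.2 fun _ => norm_nonneg _⟩ (⟨q, hq.1⟩ : K))
  exact (norm_eq_iInf_iff_real_inner_le_zero hK hq.1).1 hinf y hy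

theorem IsMetricProjection.norm_sub_le_s13 (hK : Convex ℝ K) (hq : IsMetricProjection K z q)
    (hy : y ∈ K) : ‖q - y‖ ≤ ‖z - y‖ := by
  have hobtuse := hq.inner_sub_nonpos_s13 hK hy
  have hsq : ‖z - y‖ ^ 2 = ‖z - q‖ ^ 2 - 2 * ⟪z - q, y - q⟫ + ‖q - y‖ ^ 2 := by
    rw [← sub_add_sub_cancel z q y, norm_add_sq_real, ← neg_sub y q, inner_neg_right]
    ring
  exact pow_le_pow_iff_left₀ (norm_nonneg _) (norm_nonneg _) two_ne_zero |>.1 (by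
    linarith [sq_nonneg ‖z - q‖])

theorem norm_sub_sq_eq_norm_sub_sq_add_two_inner_sub_midpoint (v u w : E) :
    ‖v - u‖ ^ 2 = ‖v - w‖ ^ 2 + 2 * ⟪v - (2 : ℝ)⁻¹ • (u + w), w - u⟫ := by
  simp only [norm_sub_sq_real, inner_sub_left, inner_sub_right, inner_add_left,
    real_inner_smul_left, real_inner_self_eq_norm_sq,
    real_inner_comm u v, real_inner_comm w v, real_inner_comm u w]
  ring

theorem IsMetricProjection.inner_le_of_gradient_step_s13 (hK : Convex ℝ K) {η : ℝ} (hη : 0 < η)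
    (hq : IsMetricProjection K (x - η • v) q) (hu : u ∈ K) :
    ⟪v, x - u⟫ ≤ (‖x - u‖ ^ 2 - ‖q - w‖ ^ 2) / (2 * η) + η / 2 * ‖v‖ ^ 2
      - ⟪q - (2 : ℝ)⁻¹ • (u + w), w - u⟫ / η := by
  have hproj : ‖q - u‖ ^ 2 ≤ ‖x - η • v - u‖ ^ 2 :=
    pow_le_pow_left₀ (norm_nonneg _) (hq.norm_sub_le_s13 hK hu) 2
  have hstep : ‖x - η • v - u‖ ^ 2 = ‖x - u‖ ^ 2 - 2 * η * ⟪v, x - u⟫ + η ^ 2 * ‖v‖ ^ 2 := by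
    rw [sub_right_comm, norm_sub_sq_real, real_inner_smul_right, norm_smul, mul_pow,
      Real.norm_eq_abs, sq_abs, real_inner_comm]
    ring
  have hmid := norm_sub_sq_eq_norm_sub_sq_add_two_inner_sub_midpoint q u w
  have hrhs : (‖x - u‖ ^ 2 - ‖q - w‖ ^ 2) / (2 * η) + η / 2 * ‖v‖ ^ 2
      - ⟪q - (2 : ℝ)⁻¹ • (u + w), w - u⟫ / η
      = (‖x - u‖ ^ 2 - ‖q - w‖ ^ 2 + η ^ 2 * ‖v‖ ^ 2
        - 2 * ⟪q - (2 : ℝ)⁻¹ • (u + w), w - u⟫) / (2 * η) := by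
    field_simp
  rw [hrhs, le_div_iff₀ (by positivity)]
  linarith

end Projection

section StepSizes

variable (a η : ℕ → ℝ) {lam : ℝ} {N : ℕ}

theorem sum_sub_div_two_mul_sub_mul_le_neg (hlam : 0 ≤ lam) (ha : ∀ t, 0 ≤ a t)
    (hη : ∀ t ∈ Icc 1 N, 0 < η t) (hη1 : 1 / η 1 ≤ lam)
    (hrec : ∀ t, 2 ≤ t → t ≤ N → 1 / η t - lam ≤ 1 / η (t - 1)) {n : ℕ} (hn : 1 ≤ n)
    (hnN : n ≤ N) :
    ∑ t ∈ Icc 1 n, ((a t - a (t + 1)) / (2 * η t) - lam * a t) ≤ -(a (n + 1) / (2 * η n)) := by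
  have half : ∀ x : ℝ, 1 / (2 * x) = 1 / x / 2 := fun x => by ring
  induction n, hn using Nat.le_induction with
  | base =>
    have hcoeff : 1 / (2 * η 1) - lam ≤ 0 := by
      have hη1pos := hη 1 (by simp only [mem_Icc]; omega)
      rw [half]
      linarith
    have hterm := mul_nonpos_of_nonneg_of_nonpos (ha 1) hcoeff
    rw [Icc_self, sum_singleton]
    linarith [show (a 1 - a 2) / (2 * η 1) - lam * a 1 + a 2 / (2 * η 1)
      = a 1 * (1 / (2 * η 1) - lam) by ring]
  | succ n hn ih =>
    have hcoeff : 1 / (2 * η (n + 1)) - lam - 1 / (2 * η n) ≤ 0 := by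
      have hstep := hrec (n + 1) (by omega) hnN
      rw [Nat.add_sub_cancel] at hstep
      rw [half, half]
      linarith
    have hterm := mul_nonpos_of_nonneg_of_nonpos (ha (n + 1)) hcoeff
    rw [sum_Icc_succ_top (by omega)]
    linarith [ih (by omega), show (a (n + 1) - a (n + 2)) / (2 * η (n + 1)) - lam * a (n + 1)
      + a (n + 2) / (2 * η (n + 1)) - a (n + 1) / (2 * η n)
      = a (n + 1) * (1 / (2 * η (n + 1)) - lam - 1 / (2 * η n)) by ring]

theorem sum_sub_div_two_mul_sub_mul_nonpos (hlam : 0 ≤ lam) (ha : ∀ t, 0 ≤ a t)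
    (hη : ∀ t ∈ Icc 1 N, 0 < η t) (hη1 : 1 / η 1 ≤ lam)
    (hrec : ∀ t, 2 ≤ t → t ≤ N → 1 / η t - lam ≤ 1 / η (t - 1)) :
    ∑ t ∈ Icc 1 N, ((a t - a (t + 1)) / (2 * η t) - lam * a t) ≤ 0 := by
  rcases Nat.eq_zero_or_pos N with rfl | hN
  · simp
  · have hsum := sum_sub_div_two_mul_sub_mul_le_neg a η hlam ha hη hη1 hrec hN le_rfl
    have hηN := hη N (by simp only [mem_Icc]; omega)
    have haN := ha (N + 1)
    have : 0 ≤ a (N + 1) / (2 * η N) := by positivity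
    linarith

end StepSizes

theorem ogd_regret_performance_strongly_convex_general {E : Type*} [NormedAddCommGroup E]
    [InnerProductSpace ℝ E]
    (K : Set E) (hK : Convex ℝ K)
    (T : ℕ) (lam G : ℝ) (hlam : 0 < lam)
    (ℓ : ℕ → E → ℝ) (g : ℕ → E → E)
    (hsc : ∀ t ∈ Icc 1 T, ∀ μ' ∈ K, ∀ μ₀ ∈ K,
      ℓ t μ' - ℓ t μ₀ ≤ ⟪g t μ', μ' - μ₀⟫ - lam * ‖μ' - μ₀‖ ^ 2)
    (hGb : ∀ t ∈ Icc 1 T, ∀ x ∈ K, ‖g t x‖ ≤ G)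
    (η : ℕ → ℝ) (hηpos : ∀ t ∈ Icc 1 T, 0 < η t)
    (hη1 : 1 / η 1 ≤ lam)
    (hηrec : ∀ t, 2 ≤ t → t ≤ T → 1 / η t - lam ≤ 1 / η (t - 1))
    (p : ℕ → E) (hp1 : p 1 ∈ K)
    (hiter : ∀ t ∈ Icc 1 T, p (t + 1) ∈ K ∧
      ∀ y ∈ K, ‖p t - η t • g t (p t) - p (t + 1)‖ ≤ ‖p t - η t • g t (p t) - y‖)
    (μ : ℕ → E) (hμK : ∀ t ∈ Icc 1 (T + 1), μ t ∈ K) :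
    ∑ t ∈ Icc 1 T, ℓ t (p t) - ∑ t ∈ Icc 1 T, ℓ t (μ t) ≤
      G ^ 2 / 2 * ∑ t ∈ Icc 1 T, η t
        - ∑ t ∈ Icc 1 T, ⟪p (t + 1) - (2 : ℝ)⁻¹ • (μ t + μ (t + 1)), μ (t + 1) - μ t⟫ / η t := by
  set a : ℕ → ℝ := fun t => ‖p t - μ t‖ ^ 2
  set perf : ℕ → ℝ := fun t => ⟪p (t + 1) - (2 : ℝ)⁻¹ • (μ t + μ (t + 1)), μ (t + 1) - μ t⟫
  have hpK : ∀ t ∈ Icc 1 T, p t ∈ K := by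
    rintro (_ | _ | s) ht
    · simp at ht
    · exact hp1
    · exact (hiter (s + 1) (by simp only [mem_Icc] at ht ⊢; omega)).1
  have step : ∀ t ∈ Icc 1 T, ℓ t (p t) - ℓ t (μ t) ≤
      ((a t - a (t + 1)) / (2 * η t) - lam * a t) + (G ^ 2 / 2 * η t - perf t / η t) := by
    intro t ht
    have hμt : μ t ∈ K := hμK t (by simp only [mem_Icc] at ht ⊢; omega)
    have hgrad := IsMetricProjection.inner_le_of_gradient_step_s13 hK (hηpos t ht) (hiter t ht) hμt
      (w := μ (t + 1))
    have hG : ‖g t (p t)‖ ^ 2 ≤ G ^ 2 := pow_le_pow_left₀ (norm_nonneg _) (hGb t ht _ (hpK t ht)) 2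
    have hsc_t := hsc t ht _ (hpK t ht) _ hμt
    have hGη := mul_le_mul_of_nonneg_left hG (half_pos (hηpos t ht)).le
    simp only [a, perf]
    linarith
  have htel := sum_sub_div_two_mul_sub_mul_nonpos a η hlam.le (fun _ => sq_nonneg _) hηpos hη1 hηrec
  calc ∑ t ∈ Icc 1 T, ℓ t (p t) - ∑ t ∈ Icc 1 T, ℓ t (μ t)
      ≤ ∑ t ∈ Icc 1 T, (((a t - a (t + 1)) / (2 * η t) - lam * a t)
          + (G ^ 2 / 2 * η t - perf t / η t)) := by
        rw [← sum_sub_distrib]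
        exact sum_le_sum step
    _ = ∑ t ∈ Icc 1 T, ((a t - a (t + 1)) / (2 * η t) - lam * a t)
          + ∑ t ∈ Icc 1 T, (G ^ 2 / 2 * η t - perf t / η t) := sum_add_distrib
    _ ≤ ∑ t ∈ Icc 1 T, (G ^ 2 / 2 * η t - perf t / η t) := add_le_of_nonpos_left htel
    _ = G ^ 2 / 2 * ∑ t ∈ Icc 1 T, η t - ∑ t ∈ Icc 1 T, perf t / η t := by
        rw [sum_sub_distrib, mul_sum]

/-- Appendix theorem: dynamic regret of classical projected OGD with `λ`-strongly convex losses
(paper's convention), with step sizes satisfying `1/η₁ ≤ λ` and `1/η_t − λ ≤ 1/η_{t−1}`, in terms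
of the performances `Perf(t) = ⟨μ̂_{t+1} − (μ_t + μ_{t+1})/2, μ_{t+1} − μ_t⟩`:
`Σℓ_t(μ̂_t) − Σℓ_t(μ_t) ≤ (G²/2)Ση_t − Σ Perf(t)/η_t`. -/
theorem ogd_regret_performance_strongly_convex {E : Type*} [NormedAddCommGroup E]
    [InnerProductSpace ℝ E] [CompleteSpace E]
    (K : Set E) (hK : Convex ℝ K)
    (T : ℕ) (hT : 1 ≤ T) (lam G : ℝ) (hlam : 0 < lam) (hG : 0 < G)
    (ℓ : ℕ → E → ℝ) (g : ℕ → E → E)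
    (hdiff : ∀ t, ∀ x : E, HasGradientAt (ℓ t) (g t x) x)
    (hsc : ∀ t ∈ Icc 1 T, ∀ μ' ∈ K, ∀ μ₀ ∈ K,
      ℓ t μ' - ℓ t μ₀ ≤ ⟪g t μ', μ' - μ₀⟫ - lam * ‖μ' - μ₀‖ ^ 2)
    (hGb : ∀ t ∈ Icc 1 T, ∀ x ∈ K, ‖g t x‖ ≤ G)
    (η : ℕ → ℝ) (hηpos : ∀ t ∈ Icc 1 T, 0 < η t)
    (hη1 : 1 / η 1 ≤ lam)
    (hηrec : ∀ t, 2 ≤ t → t ≤ T → 1 / η t - lam ≤ 1 / η (t - 1))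
    (p : ℕ → E) (hp1 : p 1 ∈ K)
    (hiter : ∀ t ∈ Icc 1 T, p (t + 1) ∈ K ∧
      ∀ y ∈ K, ‖p t - η t • g t (p t) - p (t + 1)‖ ≤ ‖p t - η t • g t (p t) - y‖)
    (μ : ℕ → E) (hμK : ∀ t ∈ Icc 1 (T + 1), μ t ∈ K) :
    ∑ t ∈ Icc 1 T, ℓ t (p t) - ∑ t ∈ Icc 1 T, ℓ t (μ t) ≤
      G ^ 2 / 2 * ∑ t ∈ Icc 1 T, η t
        - ∑ t ∈ Icc 1 T, ⟪p (t + 1) - (2 : ℝ)⁻¹ • (μ t + μ (t + 1)), μ (t + 1) - μ t⟫ / η t :=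
  ogd_regret_performance_strongly_convex_general K hK T lam G hlam ℓ g hsc hGb η hηpos hη1 hηrec p
    hp1 hiter μ hμK
end
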